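/- arXiv:2603.02869 — 7 statements merged into one kernel-verified Lean document; each statement's English description precedes it below -/
import Mathlib

section
/- Assume the compatibility condition λ_x² k_x = s_x and λ_y² k_y = s_y (i.e. Λ² = S K⁻¹). Let v̄ : [−a,a] × [0,S̄] → ℝ² be C¹, let V_r : [0,S̄] → [V_min, V_max] be C¹ with 0 < V_min ≤ V_max, and let u be a classical solution of the FrSD model with initial condition u₀. Then the system with input v̄ and output q(x,s) := K u(x,s) − S ∂²u/∂x²(x,s) is passive with storage function W: for every s ∈ [0,S̄], −∫₀^s ∫_{−a}^{a} q(x,s′)ᵀ v̄(x,s′) dx ds′ ≥ W(u(·,s)) − W(u₀). -/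
open Set MeasureTheory intervalIntegral

/-- Regularised Euclidean norm `‖y‖_{2,ε} = √(‖y‖₂² + ε)` on `ℝ × ℝ`. -/
noncomputable def nreg (ε : ℝ) (y : ℝ × ℝ) : ℝ := Real.sqrt (y.1 ^ 2 + y.2 ^ 2 + ε)

/-- `M(v) v` for the diagonal friction matrix `M(v) = diag(μ₁(v), μ₂(v))`. -/
noncomputable def Mvec (μ1 μ2 : ℝ × ℝ → ℝ) (v : ℝ × ℝ) : ℝ × ℝ :=
  (μ1 v * v.1, μ2 v * v.2)

/-- First diagonal entry of `Ψ(v̄,s) = −(1/V_r) M(V_r v̄)⁻² ‖M(V_r v̄) V_r v̄‖_{2,ε}`. -/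
noncomputable def Psi1 (μ1 μ2 : ℝ × ℝ → ℝ) (ε Vr : ℝ) (vb : ℝ × ℝ) : ℝ :=
  -(1 / Vr) * (nreg ε (Mvec μ1 μ2 (Vr • vb)) / (μ1 (Vr • vb)) ^ 2)

/-- Second diagonal entry of `Ψ`. -/
noncomputable def Psi2 (μ1 μ2 : ℝ × ℝ → ℝ) (ε Vr : ℝ) (vb : ℝ × ℝ) : ℝ :=
  -(1 / Vr) * (nreg ε (Mvec μ1 μ2 (Vr • vb)) / (μ2 (Vr • vb)) ^ 2)

/-- Classical solution of the FrSD model on the spatial interval `[−a,a]` and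
time set `D` (with set of interior times `Dint`):
`∂u/∂s − Γ(v̄,x,s) ∂²u/∂x² = ∂u/∂x + Σ(v̄,x,s) u − v̄`, with
`Σ = Ψ Σ₀`, `Γ = −Ψ Σ₁`, `Σ₀ = K/p`, `Σ₁ = S/p`, together with the Robin
boundary conditions `Λ u_x(±a,s) ± u(±a,s) = 0`.  The fields `us`, `ux`, `uxx`
are the (continuous) partial derivatives of `u`. -/
def IsFrSDSolution (a ε kx ky sx sy lamx lamy : ℝ) (μ1 μ2 : ℝ × ℝ → ℝ)
    (p : ℝ → ℝ) (Vr : ℝ → ℝ) (vb : ℝ → ℝ → ℝ × ℝ) (D Dint : Set ℝ)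
    (u us ux uxx : ℝ → ℝ → ℝ × ℝ) : Prop :=
  -- partial derivatives
  (∀ x ∈ Icc (-a) a, ∀ s ∈ D,
      HasDerivWithinAt (fun s' => u x s') (us x s) D s ∧
      HasDerivWithinAt (fun x' => u x' s) (ux x s) (Icc (-a) a) x ∧
      HasDerivWithinAt (fun x' => ux x' s) (uxx x s) (Icc (-a) a) x) ∧
  -- continuity of the partial derivatives
  ContinuousOn (fun q : ℝ × ℝ => us q.1 q.2) (Icc (-a) a ×ˢ D) ∧
  ContinuousOn (fun q : ℝ × ℝ => ux q.1 q.2) (Icc (-a) a ×ˢ D) ∧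
  ContinuousOn (fun q : ℝ × ℝ => uxx q.1 q.2) (Icc (-a) a ×ˢ D) ∧
  -- the governing PDE, componentwise
  (∀ x ∈ Ioo (-a) a, ∀ s ∈ Dint,
      (us x s).1 - (-(Psi1 μ1 μ2 ε (Vr s) (vb x s)) * (sx / p x)) * (uxx x s).1 =
        (ux x s).1 + Psi1 μ1 μ2 ε (Vr s) (vb x s) * (kx / p x) * (u x s).1 - (vb x s).1 ∧
      (us x s).2 - (-(Psi2 μ1 μ2 ε (Vr s) (vb x s)) * (sy / p x)) * (uxx x s).2 =
        (ux x s).2 + Psi2 μ1 μ2 ε (Vr s) (vb x s) * (ky / p x) * (u x s).2 - (vb x s).2) ∧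
  -- Robin boundary conditions
  (∀ s ∈ D,
      (lamx * (ux a s).1 + (u a s).1 = 0 ∧ lamy * (ux a s).2 + (u a s).2 = 0) ∧
      (lamx * (ux (-a) s).1 - (u (-a) s).1 = 0 ∧ lamy * (ux (-a) s).2 - (u (-a) s).2 = 0))

/-- Stored elastic energy
`W(u) = ½∫ (uᵀKu + u′ᵀSu′) dx + ½ u(a)ᵀSΛ⁻¹u(a) + ½ u(−a)ᵀSΛ⁻¹u(−a)`. -/
noncomputable def Wenergy (a kx ky sx sy lamx lamy : ℝ) (u du : ℝ → ℝ × ℝ) : ℝ :=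
  (1 / 2) * (∫ x in (-a)..a,
      (kx * (u x).1 ^ 2 + ky * (u x).2 ^ 2 + sx * (du x).1 ^ 2 + sy * (du x).2 ^ 2)) +
  (1 / 2) * (sx / lamx * (u a).1 ^ 2 + sy / lamy * (u a).2 ^ 2) +
  (1 / 2) * (sx / lamx * (u (-a)).1 ^ 2 + sy / lamy * (u (-a)).2 ^ 2)

/-- Squared spatial `H¹` norm `∫ (‖u‖₂² + ‖u′‖₂²) dx`. -/
noncomputable def H1sq (a : ℝ) (u du : ℝ → ℝ × ℝ) : ℝ :=
  ∫ x in (-a)..a, ((u x).1 ^ 2 + (u x).2 ^ 2 + (du x).1 ^ 2 + (du x).2 ^ 2)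

/-- Supremum of the Euclidean norm of the input `v̄` over `[−a,a] × D`. -/
noncomputable def supInput (a : ℝ) (D : Set ℝ) (vb : ℝ → ℝ → ℝ × ℝ) : ℝ :=
  sSup ((fun q : ℝ × ℝ => Real.sqrt ((vb q.1 q.2).1 ^ 2 + (vb q.1 q.2).2 ^ 2)) ''
    (Icc (-a) a ×ˢ D))

/-- Class 𝒦∞ functions. -/
def IsClassKInf (γ : ℝ → ℝ) : Prop :=
  ContinuousOn γ (Ici 0) ∧ StrictMonoOn γ (Ici 0) ∧ γ 0 = 0 ∧
    Filter.Tendsto γ Filter.atTop Filter.atTop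

/-- Class 𝒦ℒ functions. -/
def IsClassKL (β : ℝ → ℝ → ℝ) : Prop :=
  (∀ s ∈ Ici (0:ℝ), ContinuousOn (fun r => β r s) (Ici 0) ∧
      StrictMonoOn (fun r => β r s) (Ici 0) ∧ β 0 s = 0) ∧
  (∀ r > (0:ℝ), StrictAntiOn (fun s => β r s) (Ici 0) ∧
      Filter.Tendsto (fun s => β r s) Filter.atTop (nhds 0))

/-- Contact force density `q(x,s) = K u(x,s) − S ∂²u/∂x²(x,s)`, componentwise. -/
noncomputable def qForce (kx ky sx sy : ℝ) (u uxx : ℝ → ℝ → ℝ × ℝ)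
    (x s : ℝ) : ℝ × ℝ :=
  (kx * (u x s).1 - sx * (uxx x s).1, ky * (u x s).2 - sy * (uxx x s).2)


lemma ftc_icc {α β : ℝ} (hab : α ≤ β) {f f' : ℝ → ℝ}
    (hd : ∀ t ∈ Icc α β, HasDerivWithinAt f (f' t) (Icc α β) t)
    (hc : ContinuousOn f' (Icc α β)) :
    ∫ t in α..β, f' t = f β - f α := by
  apply intervalIntegral.integral_eq_sub_of_hasDeriv_right_of_le hab
  · exact fun t ht => (hd t ht).continuousWithinAt
  · intro t ht
    exact ((hd t (Ioo_subset_Icc_self ht)).hasDerivAt (Icc_mem_nhds ht.1 ht.2)).hasDerivWithinAt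
  · rw [intervalIntegrable_iff_integrableOn_Icc_of_le hab]
    exact hc.integrableOn_Icc

lemma ftc_icc' {α β lo hi : ℝ} (hlo : lo ≤ α) (hαβ : α ≤ β) (hhi : β ≤ hi) {f f' : ℝ → ℝ}
    (hd : ∀ t ∈ Icc lo hi, HasDerivWithinAt f (f' t) (Icc lo hi) t)
    (hc : ContinuousOn f' (Icc lo hi)) :
    ∫ t in α..β, f' t = f β - f α := by
  have hsub : Icc α β ⊆ Icc lo hi := Icc_subset_Icc hlo hhi
  exact ftc_icc hαβ (fun t ht => (hd t (hsub ht)).mono hsub) (hc.mono hsub)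

lemma ftc_time {lo hi : ℝ} {σ τ : ℝ} (hσ : σ ∈ Icc lo hi) (hτ : τ ∈ Icc lo hi)
    {f f' : ℝ → ℝ}
    (hd : ∀ t ∈ Icc lo hi, HasDerivWithinAt f (f' t) (Icc lo hi) t)
    (hc : ContinuousOn f' (Icc lo hi)) :
    ∫ t in σ..τ, f' t = f τ - f σ := by
  rcases le_total σ τ with h | h
  · exact ftc_icc' hσ.1 h hτ.2 hd hc
  · rw [intervalIntegral.integral_symm, ftc_icc' hτ.1 h hσ.2 hd hc]; ring

lemma exists_pos_bound {s : Set (ℝ×ℝ)} (hs : IsCompact s) {G : ℝ×ℝ → ℝ}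
    (hG : ContinuousOn G s) : ∃ C, 0 < C ∧ ∀ z ∈ s, |G z| ≤ C := by
  obtain ⟨C, hC⟩ := hs.exists_bound_of_continuousOn hG
  exact ⟨max C 1, lt_of_lt_of_le one_pos (le_max_right _ _),
    fun z hz => le_trans (hC z hz) (le_max_left _ _)⟩

lemma sliceX {α β γ δ σ : ℝ} {G : ℝ → ℝ → ℝ}
    (hG : ContinuousOn (fun z : ℝ×ℝ => G z.1 z.2) (Icc α β ×ˢ Icc γ δ)) (hσ : σ ∈ Icc γ δ) :
    ContinuousOn (fun x => G x σ) (Icc α β) := by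
  have h : (fun x => G x σ) = (fun z : ℝ×ℝ => G z.1 z.2) ∘ (fun x => (x, σ)) := rfl
  rw [h]
  exact hG.comp (Continuous.continuousOn (by continuity)) (fun x hx => ⟨hx, hσ⟩)

lemma sliceT {α β γ δ x : ℝ} {G : ℝ → ℝ → ℝ}
    (hG : ContinuousOn (fun z : ℝ×ℝ => G z.1 z.2) (Icc α β ×ˢ Icc γ δ)) (hx : x ∈ Icc α β) :
    ContinuousOn (fun σ => G x σ) (Icc γ δ) := by
  have h : (fun σ => G x σ) = (fun z : ℝ×ℝ => G z.1 z.2) ∘ (fun σ => (x, σ)) := rfl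
  rw [h]
  exact hG.comp (Continuous.continuousOn (by continuity)) (fun σ hσ => ⟨hx, hσ⟩)

lemma continuousOn_param_integral {α β γ δ : ℝ} (hab : α ≤ β) {G : ℝ → ℝ → ℝ}
    (hG : ContinuousOn (fun z : ℝ×ℝ => G z.1 z.2) (Icc α β ×ˢ Icc γ δ)) :
    ContinuousOn (fun σ => ∫ x in α..β, G x σ) (Icc γ δ) := by
  have intg : ∀ τ ∈ Icc γ δ, IntervalIntegrable (fun x => G x τ) volume α β := by
    intro τ hτ
    rw [intervalIntegrable_iff_integrableOn_Icc_of_le hab]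
    exact (sliceX hG hτ).integrableOn_Icc
  have UC := ((isCompact_Icc.prod isCompact_Icc).uniformContinuousOn_of_continuous hG)
  rw [Metric.uniformContinuousOn_iff] at UC
  intro σ hσ
  rw [Metric.continuousWithinAt_iff]
  intro ε hε
  have hden : (0:ℝ) < β - α + 1 := by linarith
  have hε' : 0 < ε / (β - α + 1) := by positivity
  obtain ⟨δ', hδ', hUC⟩ := UC _ hε'
  refine ⟨δ', hδ', fun τ hτ hdist => ?_⟩
  have key : ∀ x ∈ Set.uIoc α β, ‖G x τ - G x σ‖ ≤ ε / (β - α + 1) := by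
    intro x hx
    rw [Set.uIoc_of_le hab] at hx
    have hxI : x ∈ Icc α β := ⟨le_of_lt hx.1, hx.2⟩
    have h1 : ((x, τ) : ℝ×ℝ) ∈ Icc α β ×ˢ Icc γ δ := ⟨hxI, hτ⟩
    have h2 : ((x, σ) : ℝ×ℝ) ∈ Icc α β ×ˢ Icc γ δ := ⟨hxI, hσ⟩
    have hd : dist ((x, τ) : ℝ×ℝ) (x, σ) < δ' := by
      rw [Prod.dist_eq]; simpa using hdist
    have := hUC _ h1 _ h2 hd
    rw [Real.dist_eq] at this
    exact le_of_lt this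
  have hint : (∫ x in α..β, G x τ) - (∫ x in α..β, G x σ)
      = ∫ x in α..β, (G x τ - G x σ) :=
    (intervalIntegral.integral_sub (intg τ hτ) (intg σ hσ)).symm
  rw [Real.dist_eq, hint]
  calc |∫ x in α..β, (G x τ - G x σ)| ≤ ε / (β - α + 1) * |β - α| :=
        intervalIntegral.norm_integral_le_of_norm_le_const key
    _ < ε := by
        rw [abs_of_nonneg (by linarith : (0:ℝ) ≤ β - α)]
        calc ε / (β - α + 1) * (β - α) < ε / (β - α + 1) * (β - α + 1) := by
              apply mul_lt_mul_of_pos_left (by linarith) hε'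
          _ = ε := by field_simp
lemma hasDerivWithinAt_fst {f : ℝ → ℝ × ℝ} {y : ℝ × ℝ} {s : Set ℝ} {x : ℝ}
    (h : HasDerivWithinAt f y s x) : HasDerivWithinAt (fun t => (f t).1) y.1 s x := by
  simpa using h.hasFDerivWithinAt.fst.hasDerivWithinAt

lemma hasDerivWithinAt_snd {f : ℝ → ℝ × ℝ} {y : ℝ × ℝ} {s : Set ℝ} {x : ℝ}
    (h : HasDerivWithinAt f y s x) : HasDerivWithinAt (fun t => (f t).2) y.2 s x := by
  simpa using h.hasFDerivWithinAt.snd.hasDerivWithinAt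

lemma abs_sub_le_of_uIcc {σ τ ρ : ℝ} (h : ρ ∈ Set.uIcc σ τ) : |ρ - σ| ≤ |τ - σ| := by
  rcases le_total σ τ with hle | hle
  · rw [Set.uIcc_of_le hle] at h
    rw [abs_of_nonneg (by linarith [h.1] : (0:ℝ) ≤ ρ - σ), abs_of_nonneg (by linarith)]
    linarith [h.2]
  · rw [Set.uIcc_of_ge hle] at h
    rw [abs_of_nonpos (by linarith [h.2] : ρ - σ ≤ 0), abs_of_nonpos (by linarith)]
    linarith [h.1]

lemma jointCont {α β γ δ : ℝ} {u ux : ℝ → ℝ → ℝ}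
    (hdx : ∀ σ ∈ Icc γ δ, ∀ x ∈ Icc α β,
      HasDerivWithinAt (fun x' => u x' σ) (ux x σ) (Icc α β) x)
    (hct : ∀ x ∈ Icc α β, ContinuousOn (fun σ => u x σ) (Icc γ δ))
    {C : ℝ} (hC : ∀ z ∈ Icc α β ×ˢ Icc γ δ, |ux z.1 z.2| ≤ C) :
    ContinuousOn (fun z : ℝ × ℝ => u z.1 z.2) (Icc α β ×ˢ Icc γ δ) := by
  apply continuousOn_prod_of_continuousOn_lipschitzOnWith _ (Real.toNNReal C) hct
  intro σ hσ
  apply (convex_Icc α β).lipschitzOnWith_of_nnnorm_hasDerivWithin_le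
    (fun x hx => hdx σ hσ x hx)
  intro x hx
  rw [← NNReal.coe_le_coe, coe_nnnorm, Real.coe_toNNReal', Real.norm_eq_abs]
  exact le_trans (hC (x, σ) ⟨hx, hσ⟩) (le_max_left _ _)

lemma scalar_passivity (a Sb k c lam : ℝ)
    (ha : 0 < a) (hSb : 0 < Sb) (hk : 0 < k) (hc : 0 < c) (hlam : 0 < lam)
    (hcomp : lam ^ 2 * k = c)
    (w vb u us ux uxx : ℝ → ℝ → ℝ)
    (hw : ∀ x ∈ Ioo (-a) a, ∀ σ ∈ Ioo (0:ℝ) Sb, w x σ ≤ 0)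
    (hvb : ContinuousOn (fun z : ℝ × ℝ => vb z.1 z.2) (Icc (-a) a ×ˢ Icc 0 Sb))
    (hus : ContinuousOn (fun z : ℝ × ℝ => us z.1 z.2) (Icc (-a) a ×ˢ Icc 0 Sb))
    (hux : ContinuousOn (fun z : ℝ × ℝ => ux z.1 z.2) (Icc (-a) a ×ˢ Icc 0 Sb))
    (huxx : ContinuousOn (fun z : ℝ × ℝ => uxx z.1 z.2) (Icc (-a) a ×ˢ Icc 0 Sb))
    (hd : ∀ x ∈ Icc (-a) a, ∀ σ ∈ Icc (0:ℝ) Sb,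
      HasDerivWithinAt (fun s' => u x s') (us x σ) (Icc 0 Sb) σ ∧
      HasDerivWithinAt (fun x' => u x' σ) (ux x σ) (Icc (-a) a) x ∧
      HasDerivWithinAt (fun x' => ux x' σ) (uxx x σ) (Icc (-a) a) x)
    (hpde : ∀ x ∈ Ioo (-a) a, ∀ σ ∈ Ioo (0:ℝ) Sb,
      us x σ = -(w x σ) * c * uxx x σ + ux x σ + w x σ * k * u x σ - vb x σ)
    (hRobinA : ∀ σ ∈ Icc (0:ℝ) Sb, lam * ux a σ + u a σ = 0)
    (hRobinB : ∀ σ ∈ Icc (0:ℝ) Sb, lam * ux (-a) σ - u (-a) σ = 0) :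
    ∀ s ∈ Icc (0:ℝ) Sb,
      ((1/2) * (∫ x in (-a)..a, (k * (u x s)^2 + c * (ux x s)^2))
          + (1/2) * (c/lam) * (u a s)^2 + (1/2) * (c/lam) * (u (-a) s)^2)
        - ((1/2) * (∫ x in (-a)..a, (k * (u x 0)^2 + c * (ux x 0)^2))
          + (1/2) * (c/lam) * (u a 0)^2 + (1/2) * (c/lam) * (u (-a) 0)^2)
      ≤ -∫ σ in (0:ℝ)..s, ∫ x in (-a)..a, (k * u x σ - c * uxx x σ) * vb x σ := by
  have haI : -a ≤ a := by linarith
  have hlam0 : lam ≠ 0 := ne_of_gt hlam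
  have h0D : (0:ℝ) ∈ Icc (0:ℝ) Sb := ⟨le_refl 0, le_of_lt hSb⟩
  have haM : a ∈ Icc (-a) a := ⟨haI, le_refl a⟩
  have haM' : -a ∈ Icc (-a) a := ⟨le_refl _, haI⟩
  have hcpt : IsCompact (Icc (-a) a ×ˢ Icc (0:ℝ) Sb) := isCompact_Icc.prod isCompact_Icc
  -- joint continuity of u
  obtain ⟨Cux, hCuxpos, hCux⟩ := exists_pos_bound hcpt hux
  have hu : ContinuousOn (fun z : ℝ × ℝ => u z.1 z.2) (Icc (-a) a ×ˢ Icc (0:ℝ) Sb) :=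
    jointCont (fun σ hσ x hx => (hd x hx σ hσ).2.1)
      (fun x hx σ hσ => ((hd x hx σ hσ).1).continuousWithinAt) hCux
  -- joint continuity of q
  have hq : ContinuousOn (fun z : ℝ × ℝ => k * u z.1 z.2 - c * uxx z.1 z.2)
      (Icc (-a) a ×ˢ Icc (0:ℝ) Sb) :=
    (continuousOn_const.mul hu).sub (continuousOn_const.mul huxx)
  -- integrability helper
  have intg : ∀ (f : ℝ → ℝ), ContinuousOn f (Icc (-a) a) →
      IntervalIntegrable f volume (-a) a := by
    intro f hf
    rw [intervalIntegrable_iff_integrableOn_Icc_of_le haI]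
    exact hf.integrableOn_Icc
  -- slices
  have cu : ∀ σ ∈ Icc (0:ℝ) Sb, ContinuousOn (fun x => u x σ) (Icc (-a) a) :=
    fun σ hσ => sliceX hu hσ
  have cux : ∀ σ ∈ Icc (0:ℝ) Sb, ContinuousOn (fun x => ux x σ) (Icc (-a) a) :=
    fun σ hσ => sliceX hux hσ
  have cuxx : ∀ σ ∈ Icc (0:ℝ) Sb, ContinuousOn (fun x => uxx x σ) (Icc (-a) a) :=
    fun σ hσ => sliceX huxx hσ
  have cus : ∀ σ ∈ Icc (0:ℝ) Sb, ContinuousOn (fun x => us x σ) (Icc (-a) a) :=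
    fun σ hσ => sliceX hus hσ
  have cvb : ∀ σ ∈ Icc (0:ℝ) Sb, ContinuousOn (fun x => vb x σ) (Icc (-a) a) :=
    fun σ hσ => sliceX hvb hσ
  have cq : ∀ σ ∈ Icc (0:ℝ) Sb,
      ContinuousOn (fun x => k * u x σ - c * uxx x σ) (Icc (-a) a) :=
    fun σ hσ => sliceX (G := fun x σ => k * u x σ - c * uxx x σ) hq hσ
  -- Robin reformulations
  have hra : ∀ σ ∈ Icc (0:ℝ) Sb, ux a σ = -(u a σ) / lam := by
    intro σ hσ
    have h := hRobinA σ hσ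
    field_simp
    linarith
  have hrb : ∀ σ ∈ Icc (0:ℝ) Sb, ux (-a) σ = u (-a) σ / lam := by
    intro σ hσ
    have h := hRobinB σ hσ
    field_simp
    linarith
  -- Green's identity
  have hGreen : ∀ σ ∈ Icc (0:ℝ) Sb, ∀ τ ∈ Icc (0:ℝ) Sb,
      ∫ x in (-a)..a, (u x τ * uxx x σ - u x σ * uxx x τ) = 0 := by
    intro σ hσ τ hτ
    have hder : ∀ x ∈ Icc (-a) a,
        HasDerivWithinAt (fun x' => u x' τ * ux x' σ - u x' σ * ux x' τ)
          (u x τ * uxx x σ - u x σ * uxx x τ) (Icc (-a) a) x := by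
      intro x hx
      have h1 := ((hd x hx τ hτ).2.1.mul (hd x hx σ hσ).2.2).sub
        ((hd x hx σ hσ).2.1.mul (hd x hx τ hτ).2.2)
      exact h1.congr_deriv (by ring)
    have hcont : ContinuousOn (fun x => u x τ * uxx x σ - u x σ * uxx x τ) (Icc (-a) a) :=
      ((cu τ hτ).mul (cuxx σ hσ)).sub ((cu σ hσ).mul (cuxx τ hτ))
    rw [ftc_icc haI hder hcont, hra σ hσ, hra τ hτ, hrb σ hσ, hrb τ hτ]
    field_simp
    ring
  -- integration by parts for ∫ ux²
  have hIBP : ∀ σ ∈ Icc (0:ℝ) Sb,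
      ∫ x in (-a)..a, (ux x σ * ux x σ + u x σ * uxx x σ)
        = -(u a σ)^2 / lam - (u (-a) σ)^2 / lam := by
    intro σ hσ
    have hder : ∀ x ∈ Icc (-a) a,
        HasDerivWithinAt (fun x' => u x' σ * ux x' σ)
          (ux x σ * ux x σ + u x σ * uxx x σ) (Icc (-a) a) x :=
      fun x hx => (hd x hx σ hσ).2.1.mul (hd x hx σ hσ).2.2
    have hcont : ContinuousOn (fun x => ux x σ * ux x σ + u x σ * uxx x σ) (Icc (-a) a) :=
      ((cux σ hσ).mul (cux σ hσ)).add ((cu σ hσ).mul (cuxx σ hσ))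
    rw [ftc_icc haI hder hcont, hra σ hσ, hrb σ hσ]
    field_simp
  -- the energy as ½ ∫ u q
  have hEq : ∀ σ ∈ Icc (0:ℝ) Sb,
      (1/2) * (∫ x in (-a)..a, (k * (u x σ)^2 + c * (ux x σ)^2))
          + (1/2) * (c/lam) * (u a σ)^2 + (1/2) * (c/lam) * (u (-a) σ)^2
        = (1/2) * ∫ x in (-a)..a, u x σ * (k * u x σ - c * uxx x σ) := by
    intro σ hσ
    have i1 : IntervalIntegrable (fun x => u x σ * (k * u x σ - c * uxx x σ)) volume (-a) a :=
      intg _ ((cu σ hσ).mul (cq σ hσ))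
    have i2 : IntervalIntegrable
        (fun x => c * (ux x σ * ux x σ + u x σ * uxx x σ)) volume (-a) a :=
      intg _ (continuousOn_const.mul
        (((cux σ hσ).mul (cux σ hσ)).add ((cu σ hσ).mul (cuxx σ hσ))))
    have e1 : ∫ x in (-a)..a, (k * (u x σ)^2 + c * (ux x σ)^2)
        = (∫ x in (-a)..a, u x σ * (k * u x σ - c * uxx x σ))
          + ∫ x in (-a)..a, c * (ux x σ * ux x σ + u x σ * uxx x σ) := by
      rw [← intervalIntegral.integral_add i1 i2]
      apply intervalIntegral.integral_congr
      intro x hx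
      ring
    have e2 : ∫ x in (-a)..a, c * (ux x σ * ux x σ + u x σ * uxx x σ)
        = c * (-(u a σ)^2 / lam - (u (-a) σ)^2 / lam) := by
      rw [intervalIntegral.integral_const_mul, hIBP σ hσ]
    rw [e1, e2]
    ring
  -- difference identity
  have hP5 : ∀ σ ∈ Icc (0:ℝ) Sb, ∀ τ ∈ Icc (0:ℝ) Sb,
      ((1/2) * ∫ x in (-a)..a, u x τ * (k * u x τ - c * uxx x τ))
        - ((1/2) * ∫ x in (-a)..a, u x σ * (k * u x σ - c * uxx x σ))
      = (1/2) * ∫ x in (-a)..a,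
          (u x τ - u x σ) * ((k * u x τ - c * uxx x τ) + (k * u x σ - c * uxx x σ)) := by
    intro σ hσ τ hτ
    have i1 : IntervalIntegrable (fun x => u x τ * (k * u x τ - c * uxx x τ)) volume (-a) a :=
      intg _ ((cu τ hτ).mul (cq τ hτ))
    have i2 : IntervalIntegrable (fun x => u x σ * (k * u x σ - c * uxx x σ)) volume (-a) a :=
      intg _ ((cu σ hσ).mul (cq σ hσ))
    have i3 : IntervalIntegrable
        (fun x => c * (u x τ * uxx x σ - u x σ * uxx x τ)) volume (-a) a :=
      intg _ (continuousOn_const.mul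
        (((cu τ hτ).mul (cuxx σ hσ)).sub ((cu σ hσ).mul (cuxx τ hτ))))
    have key : (∫ x in (-a)..a,
          (u x τ - u x σ) * ((k * u x τ - c * uxx x τ) + (k * u x σ - c * uxx x σ)))
        = (∫ x in (-a)..a, u x τ * (k * u x τ - c * uxx x τ))
          - (∫ x in (-a)..a, u x σ * (k * u x σ - c * uxx x σ))
          - c * ∫ x in (-a)..a, (u x τ * uxx x σ - u x σ * uxx x τ) := by
      rw [← intervalIntegral.integral_const_mul, ← intervalIntegral.integral_sub i1 i2,
        ← intervalIntegral.integral_sub (i1.sub i2) i3]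
      apply intervalIntegral.integral_congr
      intro x hx
      ring
    rw [key, hGreen σ hσ τ hτ]
    ring
  -- bounds and uniform continuity
  obtain ⟨Cus, hCuspos, hCus⟩ := exists_pos_bound hcpt hus
  obtain ⟨Cq, hCqpos, hCq⟩ := exists_pos_bound hcpt hq
  have UCq := hcpt.uniformContinuousOn_of_continuous hq
  have UCus := hcpt.uniformContinuousOn_of_continuous hus
  rw [Metric.uniformContinuousOn_iff] at UCq UCus
  -- derivative of the energy
  have hE' : ∀ σ ∈ Icc (0:ℝ) Sb,
      HasDerivWithinAt (fun τ => (1/2) * ∫ x in (-a)..a, u x τ * (k * u x τ - c * uxx x τ))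
        (∫ x in (-a)..a, (k * u x σ - c * uxx x σ) * us x σ) (Icc (0:ℝ) Sb) σ := by
    intro σ hσ
    rw [hasDerivWithinAt_iff_isLittleO, Asymptotics.isLittleO_iff]
    intro ε hε
    have h2a1 : (0:ℝ) < 2*a+1 := by linarith
    have hεq : 0 < ε / ((2*a+1) * Cus) := by positivity
    have hεus : 0 < ε / (2 * (2*a+1) * Cq) := by positivity
    obtain ⟨δ1, hδ1, hUCq⟩ := UCq _ hεq
    obtain ⟨δ2, hδ2, hUCus⟩ := UCus _ hεus
    rw [Filter.eventually_iff, Metric.mem_nhdsWithin_iff]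
    refine ⟨min δ1 δ2, lt_min hδ1 hδ2, ?_⟩
    rintro τ ⟨hball, hτ⟩
    rw [Metric.mem_ball] at hball
    simp only [mem_setOf_eq]
    -- time integrability of us-slices
    have ius : ∀ x ∈ Icc (-a) a, IntervalIntegrable (fun ρ => us x ρ) volume σ τ := by
      intro x hx
      exact ((sliceT hus hx).mono (uIcc_subset_Icc hσ hτ)).intervalIntegrable
    -- FTC in time
    have hft : ∀ x ∈ Icc (-a) a, u x τ - u x σ = ∫ ρ in σ..τ, us x ρ := by
      intro x hx
      exact (ftc_time hσ hτ (fun t ht => (hd x hx t ht).1) (sliceT hus hx)).symm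
    -- the integrand of the remainder
    have i1 : IntervalIntegrable (fun x =>
        (u x τ - u x σ) * ((k * u x τ - c * uxx x τ) + (k * u x σ - c * uxx x σ)) / 2)
        volume (-a) a := by
      apply intg
      exact (((cu τ hτ).sub (cu σ hσ)).mul ((cq τ hτ).add (cq σ hσ))).div_const 2
    have i2 : IntervalIntegrable (fun x =>
        (τ - σ) * ((k * u x σ - c * uxx x σ) * us x σ)) volume (-a) a := by
      apply intg
      exact continuousOn_const.mul ((cq σ hσ).mul (cus σ hσ))
    have keyid : ((1/2) * ∫ x in (-a)..a, u x τ * (k * u x τ - c * uxx x τ))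
        - ((1/2) * ∫ x in (-a)..a, u x σ * (k * u x σ - c * uxx x σ))
        - (τ - σ) • (∫ x in (-a)..a, (k * u x σ - c * uxx x σ) * us x σ)
        = ∫ x in (-a)..a,
            ((u x τ - u x σ) * ((k * u x τ - c * uxx x τ) + (k * u x σ - c * uxx x σ)) / 2
              - (τ - σ) * ((k * u x σ - c * uxx x σ) * us x σ)) := by
      rw [hP5 σ hσ τ hτ, smul_eq_mul, intervalIntegral.integral_sub i1 i2,
        intervalIntegral.integral_const_mul, intervalIntegral.integral_div]
      ring
    have hbound : ∀ x ∈ Set.uIoc (-a) a,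
        ‖(u x τ - u x σ) * ((k * u x τ - c * uxx x τ) + (k * u x σ - c * uxx x σ)) / 2
            - (τ - σ) * ((k * u x σ - c * uxx x σ) * us x σ)‖
          ≤ |τ - σ| * (ε / (2*a+1)) := by
      intro x hx
      have hxI : x ∈ Icc (-a) a := by
        rw [Set.uIoc_of_le haI] at hx
        exact Ioc_subset_Icc_self hx
      have hJ2const : IntervalIntegrable (fun _ : ℝ => us x σ) volume σ τ :=
        intervalIntegrable_const
      have hJ2eq : (∫ ρ in σ..τ, (us x ρ - us x σ))
          = (∫ ρ in σ..τ, us x ρ) - (τ - σ) * us x σ := by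
        rw [intervalIntegral.integral_sub (ius x hxI) hJ2const,
          intervalIntegral.integral_const, smul_eq_mul]
      have hTid : (u x τ - u x σ) * ((k * u x τ - c * uxx x τ) + (k * u x σ - c * uxx x σ)) / 2
            - (τ - σ) * ((k * u x σ - c * uxx x σ) * us x σ)
          = (∫ ρ in σ..τ, us x ρ) * ((k * u x τ - c * uxx x τ) - (k * u x σ - c * uxx x σ)) / 2
            + (∫ ρ in σ..τ, (us x ρ - us x σ)) * (k * u x σ - c * uxx x σ) := by
        rw [hJ2eq, ← hft x hxI]
        ring
      have hJbound : |∫ ρ in σ..τ, us x ρ| ≤ Cus * |τ - σ| := by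
        have := intervalIntegral.norm_integral_le_of_norm_le_const
          (C := Cus) (f := fun ρ => us x ρ) (a := σ) (b := τ) ?_
        · simpa [Real.norm_eq_abs] using this
        · intro ρ hρ
          have hρD : ρ ∈ Icc (0:ℝ) Sb := uIcc_subset_Icc hσ hτ (Set.uIoc_subset_uIcc hρ)
          simpa [Real.norm_eq_abs] using hCus (x, ρ) ⟨hxI, hρD⟩
      have hqdiff : |(k * u x τ - c * uxx x τ) - (k * u x σ - c * uxx x σ)|
          ≤ ε / ((2*a+1) * Cus) := by
        have hd1 : dist ((x, τ) : ℝ × ℝ) (x, σ) < δ1 := by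
          rw [Prod.dist_eq]
          simp only [dist_self]
          exact max_lt hδ1 (lt_of_lt_of_le hball (min_le_left _ _))
        have := hUCq (x, τ) ⟨hxI, hτ⟩ (x, σ) ⟨hxI, hσ⟩ hd1
        rw [Real.dist_eq] at this
        exact le_of_lt this
      have hJ2bound : |∫ ρ in σ..τ, (us x ρ - us x σ)| ≤ ε / (2 * (2*a+1) * Cq) * |τ - σ| := by
        have := intervalIntegral.norm_integral_le_of_norm_le_const
          (C := ε / (2 * (2*a+1) * Cq)) (f := fun ρ => us x ρ - us x σ) (a := σ) (b := τ) ?_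
        · simpa [Real.norm_eq_abs] using this
        · intro ρ hρ
          have hρu : ρ ∈ Set.uIcc σ τ := Set.uIoc_subset_uIcc hρ
          have hρD : ρ ∈ Icc (0:ℝ) Sb := uIcc_subset_Icc hσ hτ hρu
          have hd2 : dist ((x, ρ) : ℝ × ℝ) (x, σ) < δ2 := by
            rw [Prod.dist_eq]
            simp only [dist_self]
            apply max_lt hδ2
            rw [Real.dist_eq]
            calc |ρ - σ| ≤ |τ - σ| := abs_sub_le_of_uIcc hρu
              _ < δ2 := by
                  rw [Real.dist_eq] at hball
                  exact lt_of_lt_of_le hball (min_le_right _ _)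
          have := hUCus (x, ρ) ⟨hxI, hρD⟩ (x, σ) ⟨hxI, hσ⟩ hd2
          rw [Real.dist_eq] at this
          exact le_of_lt this
      have hqσb : |k * u x σ - c * uxx x σ| ≤ Cq := hCq (x, σ) ⟨hxI, hσ⟩
      have m1 : |∫ ρ in σ..τ, us x ρ| * |(k * u x τ - c * uxx x τ) - (k * u x σ - c * uxx x σ)|
          ≤ (Cus * |τ - σ|) * (ε / ((2*a+1) * Cus)) :=
        mul_le_mul hJbound hqdiff (abs_nonneg _) (by positivity)
      have m2 : |∫ ρ in σ..τ, (us x ρ - us x σ)| * |k * u x σ - c * uxx x σ|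
          ≤ (ε / (2 * (2*a+1) * Cq) * |τ - σ|) * Cq :=
        mul_le_mul hJ2bound hqσb (abs_nonneg _) (by positivity)
      have e1 : (Cus * |τ - σ|) * (ε / ((2*a+1) * Cus)) = |τ - σ| * (ε / (2*a+1)) / 2 * 2 := by
        field_simp
      have e2 : (ε / (2 * (2*a+1) * Cq) * |τ - σ|) * Cq = |τ - σ| * (ε / (2*a+1)) / 2 := by
        field_simp
      rw [Real.norm_eq_abs, hTid]
      calc |(∫ ρ in σ..τ, us x ρ) * ((k * u x τ - c * uxx x τ) - (k * u x σ - c * uxx x σ)) / 2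
            + (∫ ρ in σ..τ, (us x ρ - us x σ)) * (k * u x σ - c * uxx x σ)|
          ≤ |(∫ ρ in σ..τ, us x ρ) * ((k * u x τ - c * uxx x τ) - (k * u x σ - c * uxx x σ)) / 2|
            + |(∫ ρ in σ..τ, (us x ρ - us x σ)) * (k * u x σ - c * uxx x σ)| := abs_add_le _ _
        _ = |∫ ρ in σ..τ, us x ρ| * |(k * u x τ - c * uxx x τ) - (k * u x σ - c * uxx x σ)| / 2
            + |∫ ρ in σ..τ, (us x ρ - us x σ)| * |k * u x σ - c * uxx x σ| := by
            rw [abs_div, abs_mul, abs_mul]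
            norm_num
        _ ≤ |τ - σ| * (ε / (2*a+1)) := by
            rw [e1] at m1
            rw [e2] at m2
            linarith
    have hfinal := intervalIntegral.norm_integral_le_of_norm_le_const hbound
    rw [← keyid] at hfinal
    have habs : |a - (-a)| = 2*a := by
      rw [abs_of_nonneg (by linarith)]
      ring
    rw [habs] at hfinal
    rw [Real.norm_eq_abs, Real.norm_eq_abs]
    calc |((1/2) * ∫ x in (-a)..a, u x τ * (k * u x τ - c * uxx x τ))
        - ((1/2) * ∫ x in (-a)..a, u x σ * (k * u x σ - c * uxx x σ))
        - (τ - σ) • (∫ x in (-a)..a, (k * u x σ - c * uxx x σ) * us x σ)|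
        ≤ |τ - σ| * (ε / (2*a+1)) * (2*a) := by
          simpa [Real.norm_eq_abs] using hfinal
      _ ≤ ε * |τ - σ| := by
          have hεd : ε = (ε / (2*a+1)) * (2*a+1) := by field_simp
          nlinarith [abs_nonneg (τ - σ), mul_nonneg (abs_nonneg (τ - σ)) (le_of_lt hεq),
            mul_nonneg (abs_nonneg (τ - σ)) (show (0:ℝ) ≤ ε / (2*a+1) by positivity)]
  -- continuity of the input power integral
  have hqvb : ContinuousOn (fun z : ℝ × ℝ => (k * u z.1 z.2 - c * uxx z.1 z.2) * vb z.1 z.2)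
      (Icc (-a) a ×ˢ Icc (0:ℝ) Sb) := hq.mul hvb
  have hFcont : ContinuousOn
      (fun σ => ∫ x in (-a)..a, (k * u x σ - c * uxx x σ) * vb x σ) (Icc (0:ℝ) Sb) :=
    continuousOn_param_integral haI
      (G := fun x σ => (k * u x σ - c * uxx x σ) * vb x σ) hqvb
  -- interior bound on the derivative
  have hLbound : ∀ σ ∈ Ioo (0:ℝ) Sb,
      (∫ x in (-a)..a, (k * u x σ - c * uxx x σ) * us x σ)
        ≤ -(∫ x in (-a)..a, (k * u x σ - c * uxx x σ) * vb x σ) := by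
    intro σ hσ
    have hσD : σ ∈ Icc (0:ℝ) Sb := Ioo_subset_Icc_self hσ
    have hzero : ∫ x in (-a)..a, (k * u x σ - c * uxx x σ) * ux x σ = 0 := by
      have hder : ∀ x ∈ Icc (-a) a, HasDerivWithinAt
          (fun x' => (k * u x' σ ^ 2 - c * ux x' σ ^ 2) / 2)
          ((k * u x σ - c * uxx x σ) * ux x σ) (Icc (-a) a) x := by
        intro x hx
        have h1 := (hd x hx σ hσD).2.1
        have h2 := (hd x hx σ hσD).2.2
        have h3 := ((((h1.pow 2).const_mul k).sub ((h2.pow 2).const_mul c)).div_const 2)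
        exact h3.congr_deriv (by push_cast; ring)
      have hcont : ContinuousOn (fun x => (k * u x σ - c * uxx x σ) * ux x σ) (Icc (-a) a) :=
        (cq σ hσD).mul (cux σ hσD)
      rw [ftc_icc haI hder hcont, hra σ hσD, hrb σ hσD, ← hcomp]
      field_simp
      ring
    have hmono : (∫ x in (-a)..a, (k * u x σ - c * uxx x σ) * us x σ)
        ≤ ∫ x in (-a)..a, ((k * u x σ - c * uxx x σ) * ux x σ
            - (k * u x σ - c * uxx x σ) * vb x σ) := by
      have hfc : ContinuousOn (fun x => (k * u x σ - c * uxx x σ) * us x σ) (Icc (-a) a) :=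
        (cq σ hσD).mul (cus σ hσD)
      have hgc : ContinuousOn (fun x => (k * u x σ - c * uxx x σ) * ux x σ
          - (k * u x σ - c * uxx x σ) * vb x σ) (Icc (-a) a) :=
        ((cq σ hσD).mul (cux σ hσD)).sub ((cq σ hσD).mul (cvb σ hσD))
      rw [intervalIntegral.integral_of_le haI, intervalIntegral.integral_of_le haI,
        integral_Ioc_eq_integral_Ioo, integral_Ioc_eq_integral_Ioo]
      apply setIntegral_mono_on
      · exact (hfc.integrableOn_Icc).mono_set Ioo_subset_Icc_self
      · exact (hgc.integrableOn_Icc).mono_set Ioo_subset_Icc_self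
      · exact measurableSet_Ioo
      · intro x hx
        have hid : (k * u x σ - c * uxx x σ) * us x σ
            - ((k * u x σ - c * uxx x σ) * ux x σ - (k * u x σ - c * uxx x σ) * vb x σ)
            = w x σ * (k * u x σ - c * uxx x σ) ^ 2 := by
          rw [hpde x hx σ hσ]
          ring
        nlinarith [mul_nonpos_of_nonpos_of_nonneg (hw x hx σ hσ)
          (sq_nonneg (k * u x σ - c * uxx x σ))]
    have hsplit : (∫ x in (-a)..a, ((k * u x σ - c * uxx x σ) * ux x σ
          - (k * u x σ - c * uxx x σ) * vb x σ))
        = (∫ x in (-a)..a, (k * u x σ - c * uxx x σ) * ux x σ)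
          - ∫ x in (-a)..a, (k * u x σ - c * uxx x σ) * vb x σ :=
      intervalIntegral.integral_sub (intg _ ((cq σ hσD).mul (cux σ hσD)))
        (intg _ ((cq σ hσD).mul (cvb σ hσD)))
    rw [hsplit, hzero] at hmono
    linarith
  -- monotone comparison
  intro s hs
  set Φ : ℝ → ℝ := fun σ =>
    ((1/2) * ∫ x in (-a)..a, u x σ * (k * u x σ - c * uxx x σ))
      + ∫ ρ in (0:ℝ)..σ, ∫ x in (-a)..a, (k * u x ρ - c * uxx x ρ) * vb x ρ with hΦdef
  have hΦcont : ContinuousOn Φ (Icc (0:ℝ) Sb) := by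
    apply ContinuousOn.add
    · exact fun σ hσ => (hE' σ hσ).continuousWithinAt
    · have hint : IntegrableOn
          (fun σ => ∫ x in (-a)..a, (k * u x σ - c * uxx x σ) * vb x σ)
          (Set.uIcc (0:ℝ) Sb) volume := by
        rw [Set.uIcc_of_le (le_of_lt hSb)]
        exact hFcont.integrableOn_Icc
      have := continuousOn_primitive_interval (a := (0:ℝ)) (b := Sb) hint
      rw [Set.uIcc_of_le (le_of_lt hSb)] at this
      exact this
  have hΦderiv : ∀ σ ∈ Ioo (0:ℝ) Sb, HasDerivAt Φ
      ((∫ x in (-a)..a, (k * u x σ - c * uxx x σ) * us x σ)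
        + (∫ x in (-a)..a, (k * u x σ - c * uxx x σ) * vb x σ)) σ := by
    intro σ hσ
    have h1 : HasDerivAt (fun τ => (1/2) * ∫ x in (-a)..a, u x τ * (k * u x τ - c * uxx x τ))
        (∫ x in (-a)..a, (k * u x σ - c * uxx x σ) * us x σ) σ :=
      (hE' σ (Ioo_subset_Icc_self hσ)).hasDerivAt (Icc_mem_nhds hσ.1 hσ.2)
    have hint2 : IntervalIntegrable
        (fun ρ => ∫ x in (-a)..a, (k * u x ρ - c * uxx x ρ) * vb x ρ) volume 0 σ := by
      rw [intervalIntegrable_iff_integrableOn_Icc_of_le (le_of_lt hσ.1)]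
      exact (hFcont.mono (Icc_subset_Icc le_rfl (le_of_lt hσ.2))).integrableOn_Icc
    have hmeas := (hFcont.mono Ioo_subset_Icc_self).stronglyMeasurableAtFilter
      (μ := volume) isOpen_Ioo σ hσ
    have hca : ContinuousAt
        (fun ρ => ∫ x in (-a)..a, (k * u x ρ - c * uxx x ρ) * vb x ρ) σ :=
      (hFcont.mono Ioo_subset_Icc_self).continuousAt (isOpen_Ioo.mem_nhds hσ)
    have h2 := intervalIntegral.integral_hasDerivAt_right hint2 hmeas hca
    exact h1.add h2
  have hanti : AntitoneOn Φ (Icc (0:ℝ) Sb) := by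
    apply antitoneOn_of_deriv_nonpos (convex_Icc _ _) hΦcont
    · intro σ hσ
      rw [interior_Icc] at hσ
      exact ((hΦderiv σ hσ).differentiableAt).differentiableWithinAt
    · intro σ hσ
      rw [interior_Icc] at hσ
      rw [(hΦderiv σ hσ).deriv]
      linarith [hLbound σ hσ]
  have hfin := hanti h0D hs hs.1
  simp only [hΦdef, intervalIntegral.integral_same, add_zero] at hfin
  rw [hEq s hs, hEq 0 h0D]
  linarith

/-- Passivity of the FrSD model with input `v̄`, output `q`, and
storage function `W`:
`−∫₀^s ∫ qᵀ v̄ dx ds′ ≥ W(u(·,s)) − W(u₀)`. -/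
theorem statement_4 (a ε kx ky sx sy lamx lamy Vmin Vmax Sb : ℝ)
    (μ1 μ2 : ℝ × ℝ → ℝ) (p : ℝ → ℝ)
    (ha : 0 < a) (hε : 0 < ε) (hSb : 0 < Sb)
    (hkx : 0 < kx) (hky : 0 < ky) (hsx : 0 < sx) (hsy : 0 < sy)
    (hlamx : 0 < lamx) (hlamy : 0 < lamy)
    -- compatibility condition Λ² = S K⁻¹
    (hcompx : lamx ^ 2 * kx = sx) (hcompy : lamy ^ 2 * ky = sy)
    (hVmin : 0 < Vmin) (hVminmax : Vmin ≤ Vmax)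
    (hμ1c : Continuous μ1) (hμ2c : Continuous μ2)
    (hμpos : ∀ v : ℝ × ℝ, 0 < μ1 v ∧ 0 < μ2 v)
    (hpC1 : ContDiffOn ℝ 1 p (Icc (-a) a)) (hppos : ∀ x ∈ Icc (-a) a, 0 < p x)
    (vb : ℝ → ℝ → ℝ × ℝ) (Vr : ℝ → ℝ) (u us ux uxx : ℝ → ℝ → ℝ × ℝ)
    (hvbC1 : ContDiffOn ℝ 1 (fun q : ℝ × ℝ => vb q.1 q.2) (Icc (-a) a ×ˢ Icc 0 Sb))
    (hVrC1 : ContDiffOn ℝ 1 Vr (Icc 0 Sb))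
    (hVr : ∀ s ∈ Icc (0:ℝ) Sb, Vr s ∈ Icc Vmin Vmax)
    (hsol : IsFrSDSolution a ε kx ky sx sy lamx lamy μ1 μ2 p Vr vb
      (Icc 0 Sb) (Ioo 0 Sb) u us ux uxx) :
    ∀ s ∈ Icc (0:ℝ) Sb,
      Wenergy a kx ky sx sy lamx lamy (fun x => u x s) (fun x => ux x s) -
          Wenergy a kx ky sx sy lamx lamy (fun x => u x 0) (fun x => ux x 0) ≤
        -∫ s' in (0:ℝ)..s, ∫ x in (-a)..a,
            ((qForce kx ky sx sy u uxx x s').1 * (vb x s').1 +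
              (qForce kx ky sx sy u uxx x s').2 * (vb x s').2) := by
  obtain ⟨hdall, husC, huxC, huxxC, hpde0, hrobin⟩ := hsol
  have haI : -a ≤ a := by linarith
  have h0D : (0:ℝ) ∈ Icc (0:ℝ) Sb := ⟨le_refl 0, hSb.le⟩
  have hcpt : IsCompact (Icc (-a) a ×ˢ Icc (0:ℝ) Sb) := isCompact_Icc.prod isCompact_Icc
  have hvbc : ContinuousOn (fun z : ℝ × ℝ => vb z.1 z.2) (Icc (-a) a ×ˢ Icc 0 Sb) :=
    hvbC1.continuousOn
  -- componentwise derivative hypotheses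
  have hd1 : ∀ x ∈ Icc (-a) a, ∀ σ ∈ Icc (0:ℝ) Sb,
      HasDerivWithinAt (fun s' => (u x s').1) ((us x σ).1) (Icc 0 Sb) σ ∧
      HasDerivWithinAt (fun x' => (u x' σ).1) ((ux x σ).1) (Icc (-a) a) x ∧
      HasDerivWithinAt (fun x' => (ux x' σ).1) ((uxx x σ).1) (Icc (-a) a) x :=
    fun x hx σ hσ => ⟨hasDerivWithinAt_fst (hdall x hx σ hσ).1,
      hasDerivWithinAt_fst (hdall x hx σ hσ).2.1, hasDerivWithinAt_fst (hdall x hx σ hσ).2.2⟩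
  have hd2 : ∀ x ∈ Icc (-a) a, ∀ σ ∈ Icc (0:ℝ) Sb,
      HasDerivWithinAt (fun s' => (u x s').2) ((us x σ).2) (Icc 0 Sb) σ ∧
      HasDerivWithinAt (fun x' => (u x' σ).2) ((ux x σ).2) (Icc (-a) a) x ∧
      HasDerivWithinAt (fun x' => (ux x' σ).2) ((uxx x σ).2) (Icc (-a) a) x :=
    fun x hx σ hσ => ⟨hasDerivWithinAt_snd (hdall x hx σ hσ).1,
      hasDerivWithinAt_snd (hdall x hx σ hσ).2.1, hasDerivWithinAt_snd (hdall x hx σ hσ).2.2⟩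
  -- sign of the weights
  have hVrpos : ∀ σ ∈ Icc (0:ℝ) Sb, 0 < Vr σ :=
    fun σ hσ => lt_of_lt_of_le hVmin (hVr σ hσ).1
  have hw1 : ∀ x ∈ Ioo (-a) a, ∀ σ ∈ Ioo (0:ℝ) Sb,
      Psi1 μ1 μ2 ε (Vr σ) (vb x σ) / p x ≤ 0 := by
    intro x hx σ hσ
    have hP : Psi1 μ1 μ2 ε (Vr σ) (vb x σ) ≤ 0 := by
      unfold Psi1
      apply mul_nonpos_of_nonpos_of_nonneg
      · have hv := hVrpos σ (Ioo_subset_Icc_self hσ)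
        have h1 : 0 ≤ 1 / Vr σ := by positivity
        linarith
      · exact div_nonneg (Real.sqrt_nonneg _) (sq_nonneg _)
    exact div_nonpos_of_nonpos_of_nonneg hP (hppos x (Ioo_subset_Icc_self hx)).le
  have hw2 : ∀ x ∈ Ioo (-a) a, ∀ σ ∈ Ioo (0:ℝ) Sb,
      Psi2 μ1 μ2 ε (Vr σ) (vb x σ) / p x ≤ 0 := by
    intro x hx σ hσ
    have hP : Psi2 μ1 μ2 ε (Vr σ) (vb x σ) ≤ 0 := by
      unfold Psi2
      apply mul_nonpos_of_nonpos_of_nonneg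
      · have hv := hVrpos σ (Ioo_subset_Icc_self hσ)
        have h1 : 0 ≤ 1 / Vr σ := by positivity
        linarith
      · exact div_nonneg (Real.sqrt_nonneg _) (sq_nonneg _)
    exact div_nonpos_of_nonpos_of_nonneg hP (hppos x (Ioo_subset_Icc_self hx)).le
  -- componentwise PDE
  have hpde1 : ∀ x ∈ Ioo (-a) a, ∀ σ ∈ Ioo (0:ℝ) Sb,
      (us x σ).1 = -(Psi1 μ1 μ2 ε (Vr σ) (vb x σ) / p x) * sx * (uxx x σ).1
        + (ux x σ).1 + (Psi1 μ1 μ2 ε (Vr σ) (vb x σ) / p x) * kx * (u x σ).1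
        - (vb x σ).1 := by
    intro x hx σ hσ
    linear_combination (hpde0 x hx σ hσ).1
  have hpde2 : ∀ x ∈ Ioo (-a) a, ∀ σ ∈ Ioo (0:ℝ) Sb,
      (us x σ).2 = -(Psi2 μ1 μ2 ε (Vr σ) (vb x σ) / p x) * sy * (uxx x σ).2
        + (ux x σ).2 + (Psi2 μ1 μ2 ε (Vr σ) (vb x σ) / p x) * ky * (u x σ).2
        - (vb x σ).2 := by
    intro x hx σ hσ
    linear_combination (hpde0 x hx σ hσ).2
  -- componentwise Robin conditions
  have hrA1 : ∀ σ ∈ Icc (0:ℝ) Sb, lamx * (ux a σ).1 + (u a σ).1 = 0 :=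
    fun σ hσ => (hrobin σ hσ).1.1
  have hrA2 : ∀ σ ∈ Icc (0:ℝ) Sb, lamy * (ux a σ).2 + (u a σ).2 = 0 :=
    fun σ hσ => (hrobin σ hσ).1.2
  have hrB1 : ∀ σ ∈ Icc (0:ℝ) Sb, lamx * (ux (-a) σ).1 - (u (-a) σ).1 = 0 :=
    fun σ hσ => (hrobin σ hσ).2.1
  have hrB2 : ∀ σ ∈ Icc (0:ℝ) Sb, lamy * (ux (-a) σ).2 - (u (-a) σ).2 = 0 :=
    fun σ hσ => (hrobin σ hσ).2.2
  -- scalar passivity in each component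
  have scal1 := scalar_passivity a Sb kx sx lamx ha hSb hkx hsx hlamx hcompx
    (fun x σ => Psi1 μ1 μ2 ε (Vr σ) (vb x σ) / p x)
    (fun x σ => (vb x σ).1) (fun x σ => (u x σ).1) (fun x σ => (us x σ).1)
    (fun x σ => (ux x σ).1) (fun x σ => (uxx x σ).1)
    hw1 hvbc.fst husC.fst huxC.fst huxxC.fst hd1 hpde1 hrA1 hrB1
  have scal2 := scalar_passivity a Sb ky sy lamy ha hSb hky hsy hlamy hcompy
    (fun x σ => Psi2 μ1 μ2 ε (Vr σ) (vb x σ) / p x)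
    (fun x σ => (vb x σ).2) (fun x σ => (u x σ).2) (fun x σ => (us x σ).2)
    (fun x σ => (ux x σ).2) (fun x σ => (uxx x σ).2)
    hw2 hvbc.snd husC.snd huxC.snd huxxC.snd hd2 hpde2 hrA2 hrB2
  -- joint continuity of the components of u
  obtain ⟨C1, hC1pos, hC1⟩ := exists_pos_bound hcpt huxC.fst
  obtain ⟨C2, hC2pos, hC2⟩ := exists_pos_bound hcpt huxC.snd
  have hu1 : ContinuousOn (fun z : ℝ × ℝ => (u z.1 z.2).1) (Icc (-a) a ×ˢ Icc (0:ℝ) Sb) :=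
    jointCont (u := fun x σ => (u x σ).1) (ux := fun x σ => (ux x σ).1)
      (fun σ hσ x hx => (hd1 x hx σ hσ).2.1)
      (fun x hx σ hσ => ((hd1 x hx σ hσ).1).continuousWithinAt) hC1
  have hu2 : ContinuousOn (fun z : ℝ × ℝ => (u z.1 z.2).2) (Icc (-a) a ×ˢ Icc (0:ℝ) Sb) :=
    jointCont (u := fun x σ => (u x σ).2) (ux := fun x σ => (ux x σ).2)
      (fun σ hσ x hx => (hd2 x hx σ hσ).2.1)
      (fun x hx σ hσ => ((hd2 x hx σ hσ).1).continuousWithinAt) hC2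
  -- continuity of the componentwise power integrals
  have hF1cont : ContinuousOn
      (fun σ => ∫ x in (-a)..a, (kx * (u x σ).1 - sx * (uxx x σ).1) * (vb x σ).1)
      (Icc (0:ℝ) Sb) :=
    continuousOn_param_integral haI
      (G := fun x σ => (kx * (u x σ).1 - sx * (uxx x σ).1) * (vb x σ).1)
      (((continuousOn_const.mul hu1).sub (continuousOn_const.mul huxxC.fst)).mul hvbc.fst)
  have hF2cont : ContinuousOn
      (fun σ => ∫ x in (-a)..a, (ky * (u x σ).2 - sy * (uxx x σ).2) * (vb x σ).2)
      (Icc (0:ℝ) Sb) :=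
    continuousOn_param_integral haI
      (G := fun x σ => (ky * (u x σ).2 - sy * (uxx x σ).2) * (vb x σ).2)
      (((continuousOn_const.mul hu2).sub (continuousOn_const.mul huxxC.snd)).mul hvbc.snd)
  -- energy splitting
  have hW : ∀ σ ∈ Icc (0:ℝ) Sb,
      Wenergy a kx ky sx sy lamx lamy (fun x => u x σ) (fun x => ux x σ)
        = (((1:ℝ)/2) * (∫ x in (-a)..a, (kx * (u x σ).1^2 + sx * (ux x σ).1^2))
            + (1/2) * (sx/lamx) * (u a σ).1^2 + (1/2) * (sx/lamx) * (u (-a) σ).1^2)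
          + (((1:ℝ)/2) * (∫ x in (-a)..a, (ky * (u x σ).2^2 + sy * (ux x σ).2^2))
            + (1/2) * (sy/lamy) * (u a σ).2^2 + (1/2) * (sy/lamy) * (u (-a) σ).2^2) := by
    intro σ hσ
    have cu1 : ContinuousOn (fun x => (u x σ).1) (Icc (-a) a) := sliceX (G := fun x σ => (u x σ).1) hu1 hσ
    have cu2 : ContinuousOn (fun x => (u x σ).2) (Icc (-a) a) := sliceX (G := fun x σ => (u x σ).2) hu2 hσ
    have cux1 : ContinuousOn (fun x => (ux x σ).1) (Icc (-a) a) :=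
      sliceX (G := fun x σ => (ux x σ).1) huxC.fst hσ
    have cux2 : ContinuousOn (fun x => (ux x σ).2) (Icc (-a) a) :=
      sliceX (G := fun x σ => (ux x σ).2) huxC.snd hσ
    have i1 : IntervalIntegrable (fun x => kx * (u x σ).1^2 + sx * (ux x σ).1^2)
        volume (-a) a := by
      rw [intervalIntegrable_iff_integrableOn_Icc_of_le haI]
      exact ((continuousOn_const.mul (cu1.pow 2)).add
        (continuousOn_const.mul (cux1.pow 2))).integrableOn_Icc
    have i2 : IntervalIntegrable (fun x => ky * (u x σ).2^2 + sy * (ux x σ).2^2)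
        volume (-a) a := by
      rw [intervalIntegrable_iff_integrableOn_Icc_of_le haI]
      exact ((continuousOn_const.mul (cu2.pow 2)).add
        (continuousOn_const.mul (cux2.pow 2))).integrableOn_Icc
    have hsplit : (∫ x in (-a)..a,
          (kx * (u x σ).1^2 + ky * (u x σ).2^2 + sx * (ux x σ).1^2 + sy * (ux x σ).2^2))
        = (∫ x in (-a)..a, (kx * (u x σ).1^2 + sx * (ux x σ).1^2))
          + ∫ x in (-a)..a, (ky * (u x σ).2^2 + sy * (ux x σ).2^2) := by
      rw [← intervalIntegral.integral_add i1 i2]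
      apply intervalIntegral.integral_congr
      intro x hx
      ring
    simp only [Wenergy]
    rw [hsplit]
    ring
  intro s hs
  have hs1 := scal1 s hs
  have hs2 := scal2 s hs
  -- split the double integral of the output power
  have hinner : ∀ σ ∈ Icc (0:ℝ) Sb,
      (∫ x in (-a)..a, ((kx * (u x σ).1 - sx * (uxx x σ).1) * (vb x σ).1
          + (ky * (u x σ).2 - sy * (uxx x σ).2) * (vb x σ).2))
        = (∫ x in (-a)..a, (kx * (u x σ).1 - sx * (uxx x σ).1) * (vb x σ).1)
          + ∫ x in (-a)..a, (ky * (u x σ).2 - sy * (uxx x σ).2) * (vb x σ).2 := by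
    intro σ hσ
    have j1 : IntervalIntegrable
        (fun x => (kx * (u x σ).1 - sx * (uxx x σ).1) * (vb x σ).1) volume (-a) a := by
      rw [intervalIntegrable_iff_integrableOn_Icc_of_le haI]
      exact (((continuousOn_const.mul (sliceX (G := fun x σ => (u x σ).1) hu1 hσ)).sub
        (continuousOn_const.mul (sliceX (G := fun x σ => (uxx x σ).1) huxxC.fst hσ))).mul
        (sliceX (G := fun x σ => (vb x σ).1) hvbc.fst hσ)).integrableOn_Icc
    have j2 : IntervalIntegrable
        (fun x => (ky * (u x σ).2 - sy * (uxx x σ).2) * (vb x σ).2) volume (-a) a := by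
      rw [intervalIntegrable_iff_integrableOn_Icc_of_le haI]
      exact (((continuousOn_const.mul (sliceX (G := fun x σ => (u x σ).2) hu2 hσ)).sub
        (continuousOn_const.mul (sliceX (G := fun x σ => (uxx x σ).2) huxxC.snd hσ))).mul
        (sliceX (G := fun x σ => (vb x σ).2) hvbc.snd hσ)).integrableOn_Icc
    exact intervalIntegral.integral_add j1 j2
  have houter : (∫ s' in (0:ℝ)..s, ∫ x in (-a)..a,
        ((kx * (u x s').1 - sx * (uxx x s').1) * (vb x s').1
          + (ky * (u x s').2 - sy * (uxx x s').2) * (vb x s').2))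
      = (∫ s' in (0:ℝ)..s, ∫ x in (-a)..a,
          (kx * (u x s').1 - sx * (uxx x s').1) * (vb x s').1)
        + ∫ s' in (0:ℝ)..s, ∫ x in (-a)..a,
          (ky * (u x s').2 - sy * (uxx x s').2) * (vb x s').2 := by
    have k1 : IntervalIntegrable
        (fun σ => ∫ x in (-a)..a, (kx * (u x σ).1 - sx * (uxx x σ).1) * (vb x σ).1)
        volume 0 s := by
      rw [intervalIntegrable_iff_integrableOn_Icc_of_le hs.1]
      exact (hF1cont.mono (Icc_subset_Icc le_rfl hs.2)).integrableOn_Icc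
    have k2 : IntervalIntegrable
        (fun σ => ∫ x in (-a)..a, (ky * (u x σ).2 - sy * (uxx x σ).2) * (vb x σ).2)
        volume 0 s := by
      rw [intervalIntegrable_iff_integrableOn_Icc_of_le hs.1]
      exact (hF2cont.mono (Icc_subset_Icc le_rfl hs.2)).integrableOn_Icc
    rw [← intervalIntegral.integral_add k1 k2]
    apply intervalIntegral.integral_congr
    intro σ hσ
    rw [Set.uIcc_of_le hs.1] at hσ
    exact hinner σ (Icc_subset_Icc le_rfl hs.2 hσ)
  simp only [qForce]
  rw [hW s hs, hW 0 h0D, houter]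
  linarith
end

section
/- Assume the compatibility condition λ_x² k_x = s_x and λ_y² k_y = s_y (i.e. Λ² = S K⁻¹). Let v̄ : [−a,a] × [0,S̄] → ℝ² be C¹, let V_r : [0,S̄] → [V_min, V_max] be C¹ with 0 < V_min ≤ V_max, and let u be a classical solution of the FrSD model. Set q(x,s) := K u(x,s) − S ∂²u/∂x²(x,s). Then the map s ↦ W(u(·,s)) is differentiable on (0,S̄) and satisfies, for every s ∈ (0,S̄), d/ds W(u(·,s)) = −∫_{−a}^{a} q(x,s)ᵀ v̄(x,s) dx + ∫_{−a}^{a} q(x,s)ᵀ (Ψ(v̄(x,s), s) / p(x)) q(x,s) dx. In particular, since Ψ(v̄, s) is negative semidefinite, d/ds W(u(·,s)) ≤ −∫_{−a}^{a} q(x,s)ᵀ v̄(x,s) dx. -/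
open Set MeasureTheory intervalIntegral

section Helpers

open Filter Topology

private lemma hdw_fst {f : ℝ → ℝ × ℝ} {f' : ℝ × ℝ} {s : Set ℝ} {x : ℝ}
    (h : HasDerivWithinAt f f' s x) :
    HasDerivWithinAt (fun t => (f t).1) f'.1 s x := by
  exact (ContinuousLinearMap.fst ℝ ℝ ℝ).hasFDerivAt.comp_hasDerivWithinAt x h

private lemma hdw_snd {f : ℝ → ℝ × ℝ} {f' : ℝ × ℝ} {s : Set ℝ} {x : ℝ}
    (h : HasDerivWithinAt f f' s x) :
    HasDerivWithinAt (fun t => (f t).2) f'.2 s x := by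
  exact (ContinuousLinearMap.snd ℝ ℝ ℝ).hasFDerivAt.comp_hasDerivWithinAt x h

/-- Scalar energy-derivative lemma: for one component, the energy
`σ ↦ ½∫ (k w² + s wₓ²) + ½ (s/λ) w(a)² + ½ (s/λ) w(−a)²` is differentiable in time
with derivative `∫ (k w − s wₓₓ) w_s`. -/
private theorem scalar_energy_deriv
    (a Sb k s lam : ℝ) (haa : -a ≤ a) (hk : 0 < k) (hs : 0 < s) (hlam : 0 < lam)
    (w ws wx wxx : ℝ → ℝ → ℝ)
    (hds : ∀ x ∈ Icc (-a) a, ∀ σ ∈ Icc (0:ℝ) Sb,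
        HasDerivWithinAt (fun σ' => w x σ') (ws x σ) (Icc 0 Sb) σ)
    (hdx : ∀ x ∈ Icc (-a) a, ∀ σ ∈ Icc (0:ℝ) Sb,
        HasDerivWithinAt (fun x' => w x' σ) (wx x σ) (Icc (-a) a) x)
    (hdxx : ∀ x ∈ Icc (-a) a, ∀ σ ∈ Icc (0:ℝ) Sb,
        HasDerivWithinAt (fun x' => wx x' σ) (wxx x σ) (Icc (-a) a) x)
    (hwsc : ContinuousOn (fun q : ℝ × ℝ => ws q.1 q.2) (Icc (-a) a ×ˢ Icc 0 Sb))
    (hwxc : ContinuousOn (fun q : ℝ × ℝ => wx q.1 q.2) (Icc (-a) a ×ˢ Icc 0 Sb))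
    (hwxxc : ContinuousOn (fun q : ℝ × ℝ => wxx q.1 q.2) (Icc (-a) a ×ˢ Icc 0 Sb))
    (hbc : ∀ σ ∈ Icc (0:ℝ) Sb,
        lam * wx a σ + w a σ = 0 ∧ lam * wx (-a) σ - w (-a) σ = 0)
    (s0 : ℝ) (hs0 : s0 ∈ Ioo 0 Sb) :
    HasDerivAt (fun σ => (1/2) * (∫ x in (-a)..a, (k * w x σ ^ 2 + s * wx x σ ^ 2))
        + (1/2) * (s / lam * w a σ ^ 2) + (1/2) * (s / lam * w (-a) σ ^ 2))
      (∫ x in (-a)..a, (k * w x s0 - s * wxx x s0) * ws x s0) s0 := by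
  have hSb : (0:ℝ) < Sb := lt_trans hs0.1 hs0.2
  have hs0T : s0 ∈ Icc (0:ℝ) Sb := Ioo_subset_Icc_self hs0
  have hauI : uIcc (-a) a = Icc (-a) a := uIcc_of_le haa
  have hIuI : Set.uIoc (-a) a = Ioc (-a) a := uIoc_of_le haa
  have haX : a ∈ Icc (-a) a := ⟨haa, le_rfl⟩
  have hmaX : -a ∈ Icc (-a) a := ⟨le_rfl, haa⟩
  -- slice continuity
  have sliceT : ∀ f : ℝ × ℝ → ℝ, ContinuousOn f (Icc (-a) a ×ˢ Icc 0 Sb) →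
      ∀ x ∈ Icc (-a) a, ContinuousOn (fun σ => f (x, σ)) (Icc (0:ℝ) Sb) := fun f hf x hx =>
    hf.comp ((continuous_const.prodMk continuous_id).continuousOn) (fun σ hσ => ⟨hx, hσ⟩)
  have sliceX : ∀ f : ℝ × ℝ → ℝ, ContinuousOn f (Icc (-a) a ×ˢ Icc 0 Sb) →
      ∀ σ ∈ Icc (0:ℝ) Sb, ContinuousOn (fun x => f (x, σ)) (Icc (-a) a) := fun f hf σ hσ =>
    hf.comp ((continuous_id.prodMk continuous_const).continuousOn) (fun x hx => ⟨hx, hσ⟩)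
  have hwX : ∀ σ ∈ Icc (0:ℝ) Sb, ContinuousOn (fun x => w x σ) (Icc (-a) a) :=
    fun σ hσ x hx => (hdx x hx σ hσ).continuousWithinAt
  have hwxX : ∀ σ ∈ Icc (0:ℝ) Sb, ContinuousOn (fun x => wx x σ) (Icc (-a) a) :=
    fun σ hσ x hx => (hdxx x hx σ hσ).continuousWithinAt
  have hwxxX : ∀ σ ∈ Icc (0:ℝ) Sb, ContinuousOn (fun x => wxx x σ) (Icc (-a) a) :=
    sliceX _ hwxxc
  -- bounds
  obtain ⟨Cws, hCws⟩ := (isCompact_Icc.prod isCompact_Icc).exists_bound_of_continuousOn hwsc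
  obtain ⟨Cxx, hCxx⟩ := (isCompact_Icc.prod isCompact_Icc).exists_bound_of_continuousOn hwxxc
  obtain ⟨Cw0, hCw0⟩ := isCompact_Icc.exists_bound_of_continuousOn (hwX s0 hs0T)
  have habs : ∀ x ∈ Icc (-a) a, ∀ σ ∈ Icc (0:ℝ) Sb, |ws x σ| ≤ Cws := by
    intro x hx σ hσ; simpa [Real.norm_eq_abs] using hCws (x, σ) ⟨hx, hσ⟩
  have habsxx : ∀ x ∈ Icc (-a) a, ∀ σ ∈ Icc (0:ℝ) Sb, |wxx x σ| ≤ Cxx := by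
    intro x hx σ hσ; simpa [Real.norm_eq_abs] using hCxx (x, σ) ⟨hx, hσ⟩
  have habs0 : ∀ x ∈ Icc (-a) a, |w x s0| ≤ Cw0 := by
    intro x hx; simpa [Real.norm_eq_abs] using hCw0 x hx
  have hCws0 : 0 ≤ Cws := le_trans (abs_nonneg _) (habs _ hmaX _ hs0T)
  have hCxx0 : 0 ≤ Cxx := le_trans (abs_nonneg _) (habsxx _ hmaX _ hs0T)
  have hCw00 : 0 ≤ Cw0 := le_trans (abs_nonneg _) (habs0 _ hmaX)
  have hlip : ∀ x ∈ Icc (-a) a, ∀ σ ∈ Icc (0:ℝ) Sb,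
      |w x σ - w x s0| ≤ Cws * |σ - s0| := by
    intro x hx σ hσ
    have := (convex_Icc (0:ℝ) Sb).norm_image_sub_le_of_norm_hasDerivWithin_le
      (fun σ' hσ' => hds x hx σ' hσ')
      (fun σ' hσ' => by simpa [Real.norm_eq_abs] using habs x hx σ' hσ') hs0T hσ
    simpa [Real.norm_eq_abs] using this
  have hdiffbd : ∀ σ ∈ Icc (0:ℝ) Sb, |σ - s0| ≤ Sb := by
    intro σ hσ; rw [abs_le]; constructor
    · linarith [hσ.1, hs0T.2]
    · linarith [hσ.2, hs0T.1]
  have hwbd : ∀ x ∈ Icc (-a) a, ∀ σ ∈ Icc (0:ℝ) Sb, |w x σ| ≤ Cw0 + Cws * Sb := by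
    intro x hx σ hσ
    have h1 := hlip x hx σ hσ
    have h2 := habs0 x hx
    have h5 : Cws * |σ - s0| ≤ Cws * Sb := mul_le_mul_of_nonneg_left (hdiffbd σ hσ) hCws0
    have h4 : |w x σ| ≤ |w x s0| + |w x σ - w x s0| := by
      calc |w x σ| = |w x s0 + (w x σ - w x s0)| := by ring_nf
        _ ≤ |w x s0| + |w x σ - w x s0| := abs_add_le _ _
    linarith
  set CG : ℝ := k * (2 * Cw0 + Cws * Sb) / 2 + s * (2 * Cxx) / 2 with hCGdef
  have hCG0 : 0 ≤ CG := by
    have h1 : (0:ℝ) ≤ 2 * Cw0 + Cws * Sb := by nlinarith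
    have h2 := mul_nonneg hk.le h1
    have h3 := mul_nonneg hs.le (by linarith : (0:ℝ) ≤ 2 * Cxx)
    rw [hCGdef]; linarith
  have hGbd : ∀ σ ∈ Icc (0:ℝ) Sb, ∀ x ∈ Icc (-a) a,
      |k / 2 * (w x σ + w x s0) - s / 2 * (wxx x σ + wxx x s0)| ≤ CG := by
    intro σ hσ x hx
    have e1 : |w x σ + w x s0| ≤ 2 * Cw0 + Cws * Sb := by
      have h1 := hwbd x hx σ hσ
      have h2 := habs0 x hx
      calc |w x σ + w x s0| ≤ |w x σ| + |w x s0| := abs_add_le _ _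
        _ ≤ 2 * Cw0 + Cws * Sb := by linarith
    have e2 : |wxx x σ + wxx x s0| ≤ 2 * Cxx := by
      have h1 := habsxx x hx σ hσ
      have h2 := habsxx x hx s0 hs0T
      calc |wxx x σ + wxx x s0| ≤ |wxx x σ| + |wxx x s0| := abs_add_le _ _
        _ ≤ 2 * Cxx := by linarith
    calc |k / 2 * (w x σ + w x s0) - s / 2 * (wxx x σ + wxx x s0)|
        ≤ |k / 2 * (w x σ + w x s0)| + |s / 2 * (wxx x σ + wxx x s0)| := abs_sub _ _
      _ = k / 2 * |w x σ + w x s0| + s / 2 * |wxx x σ + wxx x s0| := by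
          rw [abs_mul, abs_mul, abs_of_pos (by linarith : (0:ℝ) < k / 2),
            abs_of_pos (by linarith : (0:ℝ) < s / 2)]
      _ ≤ k / 2 * (2 * Cw0 + Cws * Sb) + s / 2 * (2 * Cxx) := by
          have e3 := mul_le_mul_of_nonneg_left e1 (by linarith : (0:ℝ) ≤ k / 2)
          have e4 := mul_le_mul_of_nonneg_left e2 (by linarith : (0:ℝ) ≤ s / 2)
          linarith
      _ = CG := by rw [hCGdef]; ring
  -- the key algebraic identity for energy differences
  have key : ∀ σ ∈ Icc (0:ℝ) Sb,
      ((1:ℝ)/2) * (∫ x in (-a)..a, (k * w x σ ^ 2 + s * wx x σ ^ 2))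
        - (1/2) * (∫ x in (-a)..a, (k * w x s0 ^ 2 + s * wx x s0 ^ 2))
      = (∫ x in (-a)..a,
          (k / 2 * (w x σ + w x s0) - s / 2 * (wxx x σ + wxx x s0)) * (w x σ - w x s0))
        + s / 2 * ((wx a σ + wx a s0) * (w a σ - w a s0))
        - s / 2 * ((wx (-a) σ + wx (-a) s0) * (w (-a) σ - w (-a) s0)) := by
    intro σ hσ
    have i1 : IntervalIntegrable (fun x => k * w x σ ^ 2 + s * wx x σ ^ 2)
        volume (-a) a := by
      apply ContinuousOn.intervalIntegrable
      rw [hauI]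
      exact (continuousOn_const.mul ((hwX σ hσ).pow 2)).add
        (continuousOn_const.mul ((hwxX σ hσ).pow 2))
    have i0 : IntervalIntegrable (fun x => k * w x s0 ^ 2 + s * wx x s0 ^ 2)
        volume (-a) a := by
      apply ContinuousOn.intervalIntegrable
      rw [hauI]
      exact (continuousOn_const.mul ((hwX s0 hs0T).pow 2)).add
        (continuousOn_const.mul ((hwxX s0 hs0T).pow 2))
    have hGc : ContinuousOn (fun x =>
        (k / 2 * (w x σ + w x s0) - s / 2 * (wxx x σ + wxx x s0)) * (w x σ - w x s0))
        (Icc (-a) a) :=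
      ((continuousOn_const.mul ((hwX σ hσ).add (hwX s0 hs0T))).sub
        (continuousOn_const.mul ((hwxxX σ hσ).add (hwxxX s0 hs0T)))).mul
        ((hwX σ hσ).sub (hwX s0 hs0T))
    have iG : IntervalIntegrable (fun x =>
        (k / 2 * (w x σ + w x s0) - s / 2 * (wxx x σ + wxx x s0)) * (w x σ - w x s0))
        volume (-a) a := by
      apply ContinuousOn.intervalIntegrable; rw [hauI]; exact hGc
    have hHDc : ContinuousOn (fun x => s / 2 *
        ((wxx x σ + wxx x s0) * (w x σ - w x s0)
          + (wx x σ + wx x s0) * (wx x σ - wx x s0))) (Icc (-a) a) :=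
      continuousOn_const.mul
        ((((hwxxX σ hσ).add (hwxxX s0 hs0T)).mul ((hwX σ hσ).sub (hwX s0 hs0T))).add
          (((hwxX σ hσ).add (hwxX s0 hs0T)).mul ((hwxX σ hσ).sub (hwxX s0 hs0T))))
    have iHD : IntervalIntegrable (fun x => s / 2 *
        ((wxx x σ + wxx x s0) * (w x σ - w x s0)
          + (wx x σ + wx x s0) * (wx x σ - wx x s0))) volume (-a) a := by
      apply ContinuousOn.intervalIntegrable; rw [hauI]; exact hHDc
    have hHc : ContinuousOn
        (fun x => s / 2 * ((wx x σ + wx x s0) * (w x σ - w x s0))) (Icc (-a) a) :=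
      continuousOn_const.mul
        (((hwxX σ hσ).add (hwxX s0 hs0T)).mul ((hwX σ hσ).sub (hwX s0 hs0T)))
    have ftc : (∫ x in (-a)..a, s / 2 *
          ((wxx x σ + wxx x s0) * (w x σ - w x s0)
            + (wx x σ + wx x s0) * (wx x σ - wx x s0)))
        = s / 2 * ((wx a σ + wx a s0) * (w a σ - w a s0))
          - s / 2 * ((wx (-a) σ + wx (-a) s0) * (w (-a) σ - w (-a) s0)) := by
      have := intervalIntegral.integral_eq_sub_of_hasDeriv_right_of_le haa hHc
        (f' := fun x => s / 2 * ((wxx x σ + wxx x s0) * (w x σ - w x s0)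
            + (wx x σ + wx x s0) * (wx x σ - wx x s0)))
        (fun x hx => by
          have hxI : x ∈ Icc (-a) a := Ioo_subset_Icc_self hx
          have hmem : Icc (-a) a ∈ 𝓝 x := Icc_mem_nhds hx.1 hx.2
          have d1 : HasDerivAt (fun x' => wx x' σ) (wxx x σ) x :=
            (hdxx x hxI σ hσ).hasDerivAt hmem
          have d2 : HasDerivAt (fun x' => wx x' s0) (wxx x s0) x :=
            (hdxx x hxI s0 hs0T).hasDerivAt hmem
          have d3 : HasDerivAt (fun x' => w x' σ) (wx x σ) x :=
            (hdx x hxI σ hσ).hasDerivAt hmem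
          have d4 : HasDerivAt (fun x' => w x' s0) (wx x s0) x :=
            (hdx x hxI s0 hs0T).hasDerivAt hmem
          exact (HasDerivAt.const_mul (s/2)
            ((d1.add d2).mul (d3.sub d4))).hasDerivWithinAt) iHD
      simpa using this
    have e0 : ((1:ℝ)/2) * (∫ x in (-a)..a, (k * w x σ ^ 2 + s * wx x σ ^ 2))
        - (1/2) * (∫ x in (-a)..a, (k * w x s0 ^ 2 + s * wx x s0 ^ 2))
        = ∫ x in (-a)..a, (1:ℝ)/2 * ((k * w x σ ^ 2 + s * wx x σ ^ 2)
            - (k * w x s0 ^ 2 + s * wx x s0 ^ 2)) := by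
      rw [intervalIntegral.integral_const_mul, intervalIntegral.integral_sub i1 i0]
      ring
    have hcomb : (∫ x in (-a)..a, (1:ℝ)/2 * ((k * w x σ ^ 2 + s * wx x σ ^ 2)
            - (k * w x s0 ^ 2 + s * wx x s0 ^ 2)))
        = (∫ x in (-a)..a,
            (k / 2 * (w x σ + w x s0) - s / 2 * (wxx x σ + wxx x s0)) * (w x σ - w x s0))
          + ∫ x in (-a)..a, s / 2 *
            ((wxx x σ + wxx x s0) * (w x σ - w x s0)
              + (wx x σ + wx x s0) * (wx x σ - wx x s0)) := by
      rw [← intervalIntegral.integral_add iG iHD]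
      apply intervalIntegral.integral_congr
      intro x _
      simp only
      ring
    rw [e0, hcomb, ftc]
    ring
  -- slope convergence
  set l : Filter ℝ := 𝓝[Icc (0:ℝ) Sb \ {s0}] s0 with hldef
  have hlle : l ≤ 𝓝[Icc (0:ℝ) Sb] s0 := nhdsWithin_mono _ diff_subset
  have hslopeW : ∀ x ∈ Icc (-a) a,
      Tendsto (fun σ => (w x σ - w x s0) * (σ - s0)⁻¹) l (𝓝 (ws x s0)) := by
    intro x hx
    have h := hasDerivWithinAt_iff_tendsto_slope.mp (hds x hx s0 hs0T)
    exact Tendsto.congr (fun σ => by simp [slope_def_field, div_eq_mul_inv]) h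
  have hwT : ∀ x ∈ Icc (-a) a, Tendsto (fun σ => w x σ) l (𝓝 (w x s0)) :=
    fun x hx => ((hds x hx s0 hs0T).continuousWithinAt).mono_left hlle
  have hwxT : ∀ x ∈ Icc (-a) a, Tendsto (fun σ => wx x σ) l (𝓝 (wx x s0)) :=
    fun x hx => (sliceT _ hwxc x hx s0 hs0T).mono_left hlle
  have hwxxT : ∀ x ∈ Icc (-a) a, Tendsto (fun σ => wxx x σ) l (𝓝 (wxx x s0)) :=
    fun x hx => (sliceT _ hwxxc x hx s0 hs0T).mono_left hlle
  have hIntT : Tendsto (fun σ => ∫ x in (-a)..a,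
      ((k / 2 * (w x σ + w x s0) - s / 2 * (wxx x σ + wxx x s0)) * (w x σ - w x s0))
        * (σ - s0)⁻¹) l
      (𝓝 (∫ x in (-a)..a, (k * w x s0 - s * wxx x s0) * ws x s0)) := by
    apply intervalIntegral.tendsto_integral_filter_of_dominated_convergence
      (bound := fun _ => CG * Cws)
    · filter_upwards [eventually_mem_nhdsWithin] with σ hσ
      have hσT : σ ∈ Icc (0:ℝ) Sb := hσ.1
      have hc : ContinuousOn (fun x =>
          ((k / 2 * (w x σ + w x s0) - s / 2 * (wxx x σ + wxx x s0)) * (w x σ - w x s0))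
            * (σ - s0)⁻¹) (Icc (-a) a) :=
        (((continuousOn_const.mul ((hwX σ hσT).add (hwX s0 hs0T))).sub
          (continuousOn_const.mul ((hwxxX σ hσT).add (hwxxX s0 hs0T)))).mul
          ((hwX σ hσT).sub (hwX s0 hs0T))).mul continuousOn_const
      rw [hIuI]
      exact (hc.mono Ioc_subset_Icc_self).aestronglyMeasurable measurableSet_Ioc
    · filter_upwards [eventually_mem_nhdsWithin] with σ hσ
      apply Eventually.of_forall
      intro x hxI
      have hx : x ∈ Icc (-a) a := Ioc_subset_Icc_self (hIuI ▸ hxI)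
      have hσT : σ ∈ Icc (0:ℝ) Sb := hσ.1
      have hσne : σ - s0 ≠ 0 := sub_ne_zero.mpr (by simpa using hσ.2)
      have h2 : |w x σ - w x s0| * |σ - s0|⁻¹ ≤ Cws := by
        calc |w x σ - w x s0| * |σ - s0|⁻¹
            ≤ (Cws * |σ - s0|) * |σ - s0|⁻¹ :=
              mul_le_mul_of_nonneg_right (hlip x hx σ hσT) (by positivity)
          _ = Cws := by
              rw [mul_assoc, mul_inv_cancel₀ (abs_ne_zero.mpr hσne), mul_one]
      have h1 := hGbd σ hσT x hx
      calc ‖((k / 2 * (w x σ + w x s0) - s / 2 * (wxx x σ + wxx x s0))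
              * (w x σ - w x s0)) * (σ - s0)⁻¹‖
          = |k / 2 * (w x σ + w x s0) - s / 2 * (wxx x σ + wxx x s0)|
            * (|w x σ - w x s0| * |σ - s0|⁻¹) := by
            rw [Real.norm_eq_abs, abs_mul, abs_mul, abs_inv, mul_assoc]
        _ ≤ CG * Cws := by
            apply mul_le_mul h1 h2 (by positivity) hCG0
    · exact intervalIntegrable_const
    · apply Eventually.of_forall
      intro x hxI
      have hx : x ∈ Icc (-a) a := Ioc_subset_Icc_self (hIuI ▸ hxI)
      have t1 := (hwT x hx).add
        (tendsto_const_nhds : Tendsto (fun _ : ℝ => w x s0) l (𝓝 (w x s0)))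
      have t2 := (hwxxT x hx).add
        (tendsto_const_nhds : Tendsto (fun _ : ℝ => wxx x s0) l (𝓝 (wxx x s0)))
      have tcomb := ((Tendsto.const_mul (k/2) t1).sub
        (Tendsto.const_mul (s/2) t2)).mul (hslopeW x hx)
      have hval : (k / 2 * (w x s0 + w x s0) - s / 2 * (wxx x s0 + wxx x s0)) * ws x s0
          = (k * w x s0 - s * wxx x s0) * ws x s0 := by ring
      rw [← hval]
      exact Tendsto.congr (fun σ => by ring) tcomb
  have hbT : ∀ x0 ∈ Icc (-a) a, ∀ c1 c2 : ℝ,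
      Tendsto (fun σ => (c1 * (wx x0 σ + wx x0 s0) + c2 * (w x0 σ + w x0 s0)) *
        ((w x0 σ - w x0 s0) * (σ - s0)⁻¹)) l
        (𝓝 ((c1 * (2 * wx x0 s0) + c2 * (2 * w x0 s0)) * ws x0 s0)) := by
    intro x0 hx0 c1 c2
    have t1 := (hwxT x0 hx0).add
      (tendsto_const_nhds : Tendsto (fun _ : ℝ => wx x0 s0) l (𝓝 (wx x0 s0)))
    have t2 := (hwT x0 hx0).add
      (tendsto_const_nhds : Tendsto (fun _ : ℝ => w x0 s0) l (𝓝 (w x0 s0)))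
    have t := ((Tendsto.const_mul c1 t1).add
      (Tendsto.const_mul c2 t2)).mul (hslopeW x0 hx0)
    have hval : (c1 * (wx x0 s0 + wx x0 s0) + c2 * (w x0 s0 + w x0 s0)) * ws x0 s0
        = (c1 * (2 * wx x0 s0) + c2 * (2 * w x0 s0)) * ws x0 s0 := by ring
    rw [← hval]
    exact t
  have hBa := hbT a haX (s/2) (s/lam/2)
  have hBm := hbT (-a) hmaX (-(s/2)) (s/lam/2)
  have hbca := (hbc s0 hs0T).1
  have hbcm := (hbc s0 hs0T).2
  have hlam' : lam ≠ 0 := hlam.ne'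
  have hBa0 : (s/2 * (2 * wx a s0) + s/lam/2 * (2 * w a s0)) * ws a s0 = 0 := by
    have e : s/2 * (2 * wx a s0) + s/lam/2 * (2 * w a s0)
        = s/lam * (lam * wx a s0 + w a s0) := by field_simp
    rw [e, hbca, mul_zero, zero_mul]
  have hBm0 : (-(s/2) * (2 * wx (-a) s0) + s/lam/2 * (2 * w (-a) s0)) * ws (-a) s0 = 0 := by
    have e : -(s/2) * (2 * wx (-a) s0) + s/lam/2 * (2 * w (-a) s0)
        = -(s/lam) * (lam * wx (-a) s0 - w (-a) s0) := by field_simp; ring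
    rw [e, hbcm, mul_zero, zero_mul]
  rw [hBa0] at hBa
  rw [hBm0] at hBm
  have hsum := (hIntT.add hBa).add hBm
  have hslopeE : Tendsto
      (slope (fun σ => (1/2) * (∫ x in (-a)..a, (k * w x σ ^ 2 + s * wx x σ ^ 2))
        + (1/2) * (s / lam * w a σ ^ 2) + (1/2) * (s / lam * w (-a) σ ^ 2)) s0) l
      (𝓝 (∫ x in (-a)..a, (k * w x s0 - s * wxx x s0) * ws x s0)) := by
    have heq : (fun σ => (∫ x in (-a)..a,
        ((k / 2 * (w x σ + w x s0) - s / 2 * (wxx x σ + wxx x s0)) * (w x σ - w x s0))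
          * (σ - s0)⁻¹)
        + (s/2 * (wx a σ + wx a s0) + s/lam/2 * (w a σ + w a s0)) *
            ((w a σ - w a s0) * (σ - s0)⁻¹)
        + (-(s/2) * (wx (-a) σ + wx (-a) s0) + s/lam/2 * (w (-a) σ + w (-a) s0)) *
            ((w (-a) σ - w (-a) s0) * (σ - s0)⁻¹)) =ᶠ[l]
        slope (fun σ => (1/2) * (∫ x in (-a)..a, (k * w x σ ^ 2 + s * wx x σ ^ 2))
          + (1/2) * (s / lam * w a σ ^ 2) + (1/2) * (s / lam * w (-a) σ ^ 2)) s0 := by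
      filter_upwards [eventually_mem_nhdsWithin] with σ hσ
      have hσT : σ ∈ Icc (0:ℝ) Sb := hσ.1
      have hpull : (∫ x in (-a)..a,
          ((k / 2 * (w x σ + w x s0) - s / 2 * (wxx x σ + wxx x s0)) * (w x σ - w x s0))
            * (σ - s0)⁻¹)
          = (∫ x in (-a)..a,
            (k / 2 * (w x σ + w x s0) - s / 2 * (wxx x σ + wxx x s0)) * (w x σ - w x s0))
              * (σ - s0)⁻¹ := by
        rw [intervalIntegral.integral_mul_const]
      simp only [slope_def_field]
      rw [hpull]
      linear_combination (-(σ - s0)⁻¹) * key σ hσT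
    have := hsum.congr' heq
    simpa using this
  have hfinal : HasDerivWithinAt
      (fun σ => (1/2) * (∫ x in (-a)..a, (k * w x σ ^ 2 + s * wx x σ ^ 2))
        + (1/2) * (s / lam * w a σ ^ 2) + (1/2) * (s / lam * w (-a) σ ^ 2))
      (∫ x in (-a)..a, (k * w x s0 - s * wxx x s0) * ws x s0) (Icc (0:ℝ) Sb) s0 :=
    hasDerivWithinAt_iff_tendsto_slope.mpr hslopeE
  exact hfinal.hasDerivAt (Icc_mem_nhds hs0.1 hs0.2)

end Helpers

/-- Energy balance along FrSD solutions:
`d/ds W(u(·,s)) = −∫ qᵀ v̄ dx + ∫ qᵀ (Ψ/p) q dx`, and since `Ψ` is negative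
semidefinite, `d/ds W(u(·,s)) ≤ −∫ qᵀ v̄ dx`. -/
theorem statement_5 (a ε kx ky sx sy lamx lamy Vmin Vmax Sb : ℝ)
    (μ1 μ2 : ℝ × ℝ → ℝ) (p : ℝ → ℝ)
    (ha : 0 < a) (hε : 0 < ε) (hSb : 0 < Sb)
    (hkx : 0 < kx) (hky : 0 < ky) (hsx : 0 < sx) (hsy : 0 < sy)
    (hlamx : 0 < lamx) (hlamy : 0 < lamy)
    -- compatibility condition Λ² = S K⁻¹
    (hcompx : lamx ^ 2 * kx = sx) (hcompy : lamy ^ 2 * ky = sy)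
    (hVmin : 0 < Vmin) (hVminmax : Vmin ≤ Vmax)
    (hμ1c : Continuous μ1) (hμ2c : Continuous μ2)
    (hμpos : ∀ v : ℝ × ℝ, 0 < μ1 v ∧ 0 < μ2 v)
    (hpC1 : ContDiffOn ℝ 1 p (Icc (-a) a)) (hppos : ∀ x ∈ Icc (-a) a, 0 < p x)
    (vb : ℝ → ℝ → ℝ × ℝ) (Vr : ℝ → ℝ) (u us ux uxx : ℝ → ℝ → ℝ × ℝ)
    (hvbC1 : ContDiffOn ℝ 1 (fun q : ℝ × ℝ => vb q.1 q.2) (Icc (-a) a ×ˢ Icc 0 Sb))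
    (hVrC1 : ContDiffOn ℝ 1 Vr (Icc 0 Sb))
    (hVr : ∀ s ∈ Icc (0:ℝ) Sb, Vr s ∈ Icc Vmin Vmax)
    (hsol : IsFrSDSolution a ε kx ky sx sy lamx lamy μ1 μ2 p Vr vb
      (Icc 0 Sb) (Ioo 0 Sb) u us ux uxx) :
    ∀ s ∈ Ioo (0:ℝ) Sb,
      HasDerivAt
        (fun s' => Wenergy a kx ky sx sy lamx lamy
          (fun x => u x s') (fun x => ux x s'))
        (-(∫ x in (-a)..a,
              ((qForce kx ky sx sy u uxx x s).1 * (vb x s).1 +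
                (qForce kx ky sx sy u uxx x s).2 * (vb x s).2)) +
          ∫ x in (-a)..a,
              (Psi1 μ1 μ2 ε (Vr s) (vb x s) / p x *
                  (qForce kx ky sx sy u uxx x s).1 ^ 2 +
                Psi2 μ1 μ2 ε (Vr s) (vb x s) / p x *
                  (qForce kx ky sx sy u uxx x s).2 ^ 2)) s ∧
      deriv (fun s' => Wenergy a kx ky sx sy lamx lamy
          (fun x => u x s') (fun x => ux x s')) s ≤
        -∫ x in (-a)..a,
            ((qForce kx ky sx sy u uxx x s).1 * (vb x s).1 +
              (qForce kx ky sx sy u uxx x s).2 * (vb x s).2) := by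
  obtain ⟨hder, hcus, hcux, hcuxx, hpde, hbcs⟩ := hsol
  intro s0 hs0
  have hs0T : s0 ∈ Icc (0:ℝ) Sb := Ioo_subset_Icc_self hs0
  have haa : -a ≤ a := by linarith
  have hauI : uIcc (-a) a = Icc (-a) a := uIcc_of_le haa
  have haX : a ∈ Icc (-a) a := ⟨haa, le_rfl⟩
  have hmaX : -a ∈ Icc (-a) a := ⟨le_rfl, haa⟩
  -- scalar energy derivatives for the two components
  have hD1 := scalar_energy_deriv a Sb kx sx lamx haa hkx hsx hlamx
    (fun x σ => (u x σ).1) (fun x σ => (us x σ).1) (fun x σ => (ux x σ).1)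
    (fun x σ => (uxx x σ).1)
    (fun x hx σ hσ => hdw_fst (hder x hx σ hσ).1)
    (fun x hx σ hσ => hdw_fst (hder x hx σ hσ).2.1)
    (fun x hx σ hσ => hdw_fst (hder x hx σ hσ).2.2)
    (continuous_fst.comp_continuousOn hcus)
    (continuous_fst.comp_continuousOn hcux)
    (continuous_fst.comp_continuousOn hcuxx)
    (fun σ hσ => ⟨((hbcs σ hσ).1).1, ((hbcs σ hσ).2).1⟩) s0 hs0
  have hD2 := scalar_energy_deriv a Sb ky sy lamy haa hky hsy hlamy
    (fun x σ => (u x σ).2) (fun x σ => (us x σ).2) (fun x σ => (ux x σ).2)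
    (fun x σ => (uxx x σ).2)
    (fun x hx σ hσ => hdw_snd (hder x hx σ hσ).1)
    (fun x hx σ hσ => hdw_snd (hder x hx σ hσ).2.1)
    (fun x hx σ hσ => hdw_snd (hder x hx σ hσ).2.2)
    (continuous_snd.comp_continuousOn hcus)
    (continuous_snd.comp_continuousOn hcux)
    (continuous_snd.comp_continuousOn hcuxx)
    (fun σ hσ => ⟨((hbcs σ hσ).1).2, ((hbcs σ hσ).2).2⟩) s0 hs0
  -- continuity on [−a,a] at time s0
  have cu1 : ContinuousOn (fun x => (u x s0).1) (Icc (-a) a) :=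
    fun x hx => (hdw_fst (hder x hx s0 hs0T).2.1).continuousWithinAt
  have cu2 : ContinuousOn (fun x => (u x s0).2) (Icc (-a) a) :=
    fun x hx => (hdw_snd (hder x hx s0 hs0T).2.1).continuousWithinAt
  have cux1 : ContinuousOn (fun x => (ux x s0).1) (Icc (-a) a) :=
    fun x hx => (hdw_fst (hder x hx s0 hs0T).2.2).continuousWithinAt
  have cux2 : ContinuousOn (fun x => (ux x s0).2) (Icc (-a) a) :=
    fun x hx => (hdw_snd (hder x hx s0 hs0T).2.2).continuousWithinAt
  have cuxx1 : ContinuousOn (fun x => (uxx x s0).1) (Icc (-a) a) :=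
    (continuous_fst.comp_continuousOn hcuxx).comp
      ((continuous_id.prodMk continuous_const).continuousOn) (fun x hx => ⟨hx, hs0T⟩)
  have cuxx2 : ContinuousOn (fun x => (uxx x s0).2) (Icc (-a) a) :=
    (continuous_snd.comp_continuousOn hcuxx).comp
      ((continuous_id.prodMk continuous_const).continuousOn) (fun x hx => ⟨hx, hs0T⟩)
  have cvb : ContinuousOn (fun x => vb x s0) (Icc (-a) a) :=
    hvbC1.continuousOn.comp
      ((continuous_id.prodMk continuous_const).continuousOn) (fun x hx => ⟨hx, hs0T⟩)
  have cvb1 : ContinuousOn (fun x => (vb x s0).1) (Icc (-a) a) :=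
    continuous_fst.comp_continuousOn cvb
  have cvb2 : ContinuousOn (fun x => (vb x s0).2) (Icc (-a) a) :=
    continuous_snd.comp_continuousOn cvb
  have hVrpos : 0 < Vr s0 := lt_of_lt_of_le hVmin (hVr s0 hs0T).1
  have hsm : Continuous (fun v : ℝ × ℝ => Vr s0 • v) := continuous_const_smul (Vr s0)
  have hm1 : Continuous (fun v : ℝ × ℝ => μ1 (Vr s0 • v)) := hμ1c.comp hsm
  have hm2 : Continuous (fun v : ℝ × ℝ => μ2 (Vr s0 • v)) := hμ2c.comp hsm
  have hnreg : Continuous (fun v : ℝ × ℝ => nreg ε (Mvec μ1 μ2 (Vr s0 • v))) := by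
    unfold nreg Mvec
    apply Real.continuous_sqrt.comp
    exact (((hm1.mul (continuous_fst.comp hsm)).pow 2).add
      ((hm2.mul (continuous_snd.comp hsm)).pow 2)).add continuous_const
  have cPsiv1 : Continuous (fun v : ℝ × ℝ => Psi1 μ1 μ2 ε (Vr s0) v) := by
    unfold Psi1
    exact continuous_const.mul
      (hnreg.div (hm1.pow 2) (fun v => pow_ne_zero _ (hμpos _).1.ne'))
  have cPsiv2 : Continuous (fun v : ℝ × ℝ => Psi2 μ1 μ2 ε (Vr s0) v) := by
    unfold Psi2
    exact continuous_const.mul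
      (hnreg.div (hm2.pow 2) (fun v => pow_ne_zero _ (hμpos _).2.ne'))
  have cP1 : ContinuousOn (fun x => Psi1 μ1 μ2 ε (Vr s0) (vb x s0)) (Icc (-a) a) :=
    cPsiv1.comp_continuousOn cvb
  have cP2 : ContinuousOn (fun x => Psi2 μ1 μ2 ε (Vr s0) (vb x s0)) (Icc (-a) a) :=
    cPsiv2.comp_continuousOn cvb
  have cp : ContinuousOn p (Icc (-a) a) := hpC1.continuousOn
  have hpne : ∀ x ∈ Icc (-a) a, p x ≠ 0 := fun x hx => (hppos x hx).ne'
  have cq1 : ContinuousOn (fun x => kx * (u x s0).1 - sx * (uxx x s0).1) (Icc (-a) a) :=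
    (continuousOn_const.mul cu1).sub (continuousOn_const.mul cuxx1)
  have cq2 : ContinuousOn (fun x => ky * (u x s0).2 - sy * (uxx x s0).2) (Icc (-a) a) :=
    (continuousOn_const.mul cu2).sub (continuousOn_const.mul cuxx2)
  -- integrability
  have iA1 : IntervalIntegrable
      (fun x => (kx * (u x s0).1 - sx * (uxx x s0).1) * (ux x s0).1) volume (-a) a := by
    apply ContinuousOn.intervalIntegrable; rw [hauI]; exact cq1.mul cux1
  have iA2 : IntervalIntegrable
      (fun x => (ky * (u x s0).2 - sy * (uxx x s0).2) * (ux x s0).2) volume (-a) a := by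
    apply ContinuousOn.intervalIntegrable; rw [hauI]; exact cq2.mul cux2
  have iB1 : IntervalIntegrable (fun x => Psi1 μ1 μ2 ε (Vr s0) (vb x s0) / p x *
      (kx * (u x s0).1 - sx * (uxx x s0).1) ^ 2) volume (-a) a := by
    apply ContinuousOn.intervalIntegrable; rw [hauI]
    exact (cP1.div cp hpne).mul (cq1.pow 2)
  have iB2 : IntervalIntegrable (fun x => Psi2 μ1 μ2 ε (Vr s0) (vb x s0) / p x *
      (ky * (u x s0).2 - sy * (uxx x s0).2) ^ 2) volume (-a) a := by
    apply ContinuousOn.intervalIntegrable; rw [hauI]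
    exact (cP2.div cp hpne).mul (cq2.pow 2)
  have iC1 : IntervalIntegrable
      (fun x => (kx * (u x s0).1 - sx * (uxx x s0).1) * (vb x s0).1) volume (-a) a := by
    apply ContinuousOn.intervalIntegrable; rw [hauI]; exact cq1.mul cvb1
  have iC2 : IntervalIntegrable
      (fun x => (ky * (u x s0).2 - sy * (uxx x s0).2) * (vb x s0).2) volume (-a) a := by
    apply ContinuousOn.intervalIntegrable; rw [hauI]; exact cq2.mul cvb2
  -- use the PDE pointwise a.e.
  have hae : ∀ᵐ x : ℝ ∂volume, x ≠ a := by simp [ae_iff, measure_singleton]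
  have hval1 : (∫ x in (-a)..a, (kx * (u x s0).1 - sx * (uxx x s0).1) * (us x s0).1)
      = (∫ x in (-a)..a, (kx * (u x s0).1 - sx * (uxx x s0).1) * (ux x s0).1)
        + (∫ x in (-a)..a, Psi1 μ1 μ2 ε (Vr s0) (vb x s0) / p x *
            (kx * (u x s0).1 - sx * (uxx x s0).1) ^ 2)
        - ∫ x in (-a)..a, (kx * (u x s0).1 - sx * (uxx x s0).1) * (vb x s0).1 := by
    rw [← intervalIntegral.integral_add iA1 iB1,
      ← intervalIntegral.integral_sub (iA1.add iB1) iC1]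
    apply intervalIntegral.integral_congr_ae
    filter_upwards [hae] with x hxa hxI
    have hxI' : x ∈ Ioc (-a) a := by rwa [uIoc_of_le haa] at hxI
    have hxo : x ∈ Ioo (-a) a := ⟨hxI'.1, lt_of_le_of_ne hxI'.2 hxa⟩
    have hp := (hpde x hxo s0 hs0).1
    linear_combination (kx * (u x s0).1 - sx * (uxx x s0).1) * hp
  have hval2 : (∫ x in (-a)..a, (ky * (u x s0).2 - sy * (uxx x s0).2) * (us x s0).2)
      = (∫ x in (-a)..a, (ky * (u x s0).2 - sy * (uxx x s0).2) * (ux x s0).2)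
        + (∫ x in (-a)..a, Psi2 μ1 μ2 ε (Vr s0) (vb x s0) / p x *
            (ky * (u x s0).2 - sy * (uxx x s0).2) ^ 2)
        - ∫ x in (-a)..a, (ky * (u x s0).2 - sy * (uxx x s0).2) * (vb x s0).2 := by
    rw [← intervalIntegral.integral_add iA2 iB2,
      ← intervalIntegral.integral_sub (iA2.add iB2) iC2]
    apply intervalIntegral.integral_congr_ae
    filter_upwards [hae] with x hxa hxI
    have hxI' : x ∈ Ioc (-a) a := by rwa [uIoc_of_le haa] at hxI
    have hxo : x ∈ Ioo (-a) a := ⟨hxI'.1, lt_of_le_of_ne hxI'.2 hxa⟩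
    have hp := (hpde x hxo s0 hs0).2
    linear_combination (ky * (u x s0).2 - sy * (uxx x s0).2) * hp
  -- the transport term integrates to zero (FTC + boundary conditions + compatibility)
  have hzero1 : (∫ x in (-a)..a, (kx * (u x s0).1 - sx * (uxx x s0).1) * (ux x s0).1)
      = 0 := by
    have hftc := intervalIntegral.integral_eq_sub_of_hasDeriv_right_of_le haa
      (f := fun x => kx/2 * ((u x s0).1 * (u x s0).1) - sx/2 * ((ux x s0).1 * (ux x s0).1))
      (f' := fun x => (kx * (u x s0).1 - sx * (uxx x s0).1) * (ux x s0).1)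
      ((continuousOn_const.mul (cu1.mul cu1)).sub (continuousOn_const.mul (cux1.mul cux1)))
      (fun x hx => by
        have hxI : x ∈ Icc (-a) a := Ioo_subset_Icc_self hx
        have hmem : Icc (-a) a ∈ nhds x := Icc_mem_nhds hx.1 hx.2
        have d3 : HasDerivAt (fun x' => (u x' s0).1) ((ux x s0).1) x :=
          (hdw_fst (hder x hxI s0 hs0T).2.1).hasDerivAt hmem
        have d4 : HasDerivAt (fun x' => (ux x' s0).1) ((uxx x s0).1) x :=
          (hdw_fst (hder x hxI s0 hs0T).2.2).hasDerivAt hmem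
        have h := (HasDerivAt.const_mul (kx/2) (d3.mul d3)).sub
          (HasDerivAt.const_mul (sx/2) (d4.mul d4))
        have e : (kx * (u x s0).1 - sx * (uxx x s0).1) * (ux x s0).1
            = kx/2 * ((ux x s0).1 * (u x s0).1 + (u x s0).1 * (ux x s0).1)
              - sx/2 * ((uxx x s0).1 * (ux x s0).1 + (ux x s0).1 * (uxx x s0).1) := by ring
        refine HasDerivWithinAt.congr_deriv h.hasDerivWithinAt ?_
        ring) iA1
    rw [hftc]
    have hba := ((hbcs s0 hs0T).1).1
    have hbm := ((hbcs s0 hs0T).2).1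
    linear_combination (kx/2 * ((u a s0).1 - lamx * (ux a s0).1)) * hba
      + ((ux a s0).1 * (ux a s0).1 / 2) * hcompx
      + (kx/2 * ((u (-a) s0).1 + lamx * (ux (-a) s0).1)) * hbm
      - ((ux (-a) s0).1 * (ux (-a) s0).1 / 2) * hcompx
  have hzero2 : (∫ x in (-a)..a, (ky * (u x s0).2 - sy * (uxx x s0).2) * (ux x s0).2)
      = 0 := by
    have hftc := intervalIntegral.integral_eq_sub_of_hasDeriv_right_of_le haa
      (f := fun x => ky/2 * ((u x s0).2 * (u x s0).2) - sy/2 * ((ux x s0).2 * (ux x s0).2))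
      (f' := fun x => (ky * (u x s0).2 - sy * (uxx x s0).2) * (ux x s0).2)
      ((continuousOn_const.mul (cu2.mul cu2)).sub (continuousOn_const.mul (cux2.mul cux2)))
      (fun x hx => by
        have hxI : x ∈ Icc (-a) a := Ioo_subset_Icc_self hx
        have hmem : Icc (-a) a ∈ nhds x := Icc_mem_nhds hx.1 hx.2
        have d3 : HasDerivAt (fun x' => (u x' s0).2) ((ux x s0).2) x :=
          (hdw_snd (hder x hxI s0 hs0T).2.1).hasDerivAt hmem
        have d4 : HasDerivAt (fun x' => (ux x' s0).2) ((uxx x s0).2) x :=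
          (hdw_snd (hder x hxI s0 hs0T).2.2).hasDerivAt hmem
        have h := (HasDerivAt.const_mul (ky/2) (d3.mul d3)).sub
          (HasDerivAt.const_mul (sy/2) (d4.mul d4))
        have e : (ky * (u x s0).2 - sy * (uxx x s0).2) * (ux x s0).2
            = ky/2 * ((ux x s0).2 * (u x s0).2 + (u x s0).2 * (ux x s0).2)
              - sy/2 * ((uxx x s0).2 * (ux x s0).2 + (ux x s0).2 * (uxx x s0).2) := by ring
        refine HasDerivWithinAt.congr_deriv h.hasDerivWithinAt ?_
        ring) iA2
    rw [hftc]
    have hba := ((hbcs s0 hs0T).1).2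
    have hbm := ((hbcs s0 hs0T).2).2
    linear_combination (ky/2 * ((u a s0).2 - lamy * (ux a s0).2)) * hba
      + ((ux a s0).2 * (ux a s0).2 / 2) * hcompy
      + (ky/2 * ((u (-a) s0).2 + lamy * (ux (-a) s0).2)) * hbm
      - ((ux (-a) s0).2 * (ux (-a) s0).2 / 2) * hcompy
  -- the energy coincides with the sum of the two scalar energies near s0
  have hEV : (fun σ => Wenergy a kx ky sx sy lamx lamy (fun x => u x σ) (fun x => ux x σ))
      =ᶠ[nhds s0] (fun σ =>
        ((1/2) * (∫ x in (-a)..a, (kx * (u x σ).1 ^ 2 + sx * (ux x σ).1 ^ 2))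
          + (1/2) * (sx / lamx * (u a σ).1 ^ 2) + (1/2) * (sx / lamx * (u (-a) σ).1 ^ 2))
        + ((1/2) * (∫ x in (-a)..a, (ky * (u x σ).2 ^ 2 + sy * (ux x σ).2 ^ 2))
          + (1/2) * (sy / lamy * (u a σ).2 ^ 2)
          + (1/2) * (sy / lamy * (u (-a) σ).2 ^ 2))) := by
    filter_upwards [Ioo_mem_nhds hs0.1 hs0.2] with σ hσ
    have hσT : σ ∈ Icc (0:ℝ) Sb := Ioo_subset_Icc_self hσ
    have c1σ : ContinuousOn (fun x => (u x σ).1) (Icc (-a) a) :=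
      fun x hx => (hdw_fst (hder x hx σ hσT).2.1).continuousWithinAt
    have c2σ : ContinuousOn (fun x => (u x σ).2) (Icc (-a) a) :=
      fun x hx => (hdw_snd (hder x hx σ hσT).2.1).continuousWithinAt
    have cx1σ : ContinuousOn (fun x => (ux x σ).1) (Icc (-a) a) :=
      fun x hx => (hdw_fst (hder x hx σ hσT).2.2).continuousWithinAt
    have cx2σ : ContinuousOn (fun x => (ux x σ).2) (Icc (-a) a) :=
      fun x hx => (hdw_snd (hder x hx σ hσT).2.2).continuousWithinAt
    have i1 : IntervalIntegrable
        (fun x => kx * (u x σ).1 ^ 2 + sx * (ux x σ).1 ^ 2) volume (-a) a := by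
      apply ContinuousOn.intervalIntegrable; rw [hauI]
      exact (continuousOn_const.mul (c1σ.pow 2)).add (continuousOn_const.mul (cx1σ.pow 2))
    have i2 : IntervalIntegrable
        (fun x => ky * (u x σ).2 ^ 2 + sy * (ux x σ).2 ^ 2) volume (-a) a := by
      apply ContinuousOn.intervalIntegrable; rw [hauI]
      exact (continuousOn_const.mul (c2σ.pow 2)).add (continuousOn_const.mul (cx2σ.pow 2))
    have hsplit : (∫ x in (-a)..a, (kx * (u x σ).1 ^ 2 + ky * (u x σ).2 ^ 2
          + sx * (ux x σ).1 ^ 2 + sy * (ux x σ).2 ^ 2))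
        = (∫ x in (-a)..a, (kx * (u x σ).1 ^ 2 + sx * (ux x σ).1 ^ 2))
          + ∫ x in (-a)..a, (ky * (u x σ).2 ^ 2 + sy * (ux x σ).2 ^ 2) := by
      rw [← intervalIntegral.integral_add i1 i2]
      apply intervalIntegral.integral_congr
      intro x _
      simp only
      ring
    simp only [Wenergy]
    rw [hsplit]
    ring
  have hW := HasDerivAt.congr_of_eventuallyEq (hD1.add hD2) hEV
  have hW' : HasDerivAt
      (fun s' => Wenergy a kx ky sx sy lamx lamy (fun x => u x s') (fun x => ux x s'))
      ((∫ x in (-a)..a, (kx * (u x s0).1 - sx * (uxx x s0).1) * (us x s0).1)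
        + ∫ x in (-a)..a, (ky * (u x s0).2 - sy * (uxx x s0).2) * (us x s0).2) s0 := hW
  -- identify the stated integrals with the componentwise ones
  have hsC : (∫ x in (-a)..a, ((qForce kx ky sx sy u uxx x s0).1 * (vb x s0).1
        + (qForce kx ky sx sy u uxx x s0).2 * (vb x s0).2))
      = (∫ x in (-a)..a, (kx * (u x s0).1 - sx * (uxx x s0).1) * (vb x s0).1)
        + ∫ x in (-a)..a, (ky * (u x s0).2 - sy * (uxx x s0).2) * (vb x s0).2 := by
    rw [← intervalIntegral.integral_add iC1 iC2]
    apply intervalIntegral.integral_congr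
    intro x _
    simp only [qForce]
  have hsB : (∫ x in (-a)..a,
        (Psi1 μ1 μ2 ε (Vr s0) (vb x s0) / p x * (qForce kx ky sx sy u uxx x s0).1 ^ 2
          + Psi2 μ1 μ2 ε (Vr s0) (vb x s0) / p x * (qForce kx ky sx sy u uxx x s0).2 ^ 2))
      = (∫ x in (-a)..a, Psi1 μ1 μ2 ε (Vr s0) (vb x s0) / p x *
            (kx * (u x s0).1 - sx * (uxx x s0).1) ^ 2)
        + ∫ x in (-a)..a, Psi2 μ1 μ2 ε (Vr s0) (vb x s0) / p x *
            (ky * (u x s0).2 - sy * (uxx x s0).2) ^ 2 := by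
    rw [← intervalIntegral.integral_add iB1 iB2]
    apply intervalIntegral.integral_congr
    intro x _
    simp only [qForce]
  have hvalfin : (-(∫ x in (-a)..a,
        ((qForce kx ky sx sy u uxx x s0).1 * (vb x s0).1 +
          (qForce kx ky sx sy u uxx x s0).2 * (vb x s0).2)) +
      ∫ x in (-a)..a,
        (Psi1 μ1 μ2 ε (Vr s0) (vb x s0) / p x * (qForce kx ky sx sy u uxx x s0).1 ^ 2 +
          Psi2 μ1 μ2 ε (Vr s0) (vb x s0) / p x * (qForce kx ky sx sy u uxx x s0).2 ^ 2))
      = (∫ x in (-a)..a, (kx * (u x s0).1 - sx * (uxx x s0).1) * (us x s0).1)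
        + ∫ x in (-a)..a, (ky * (u x s0).2 - sy * (uxx x s0).2) * (us x s0).2 := by
    rw [hsC, hsB, hval1, hval2, hzero1, hzero2]
    ring
  constructor
  · rw [hvalfin]
    exact hW'
  · rw [hW'.deriv]
    have hB1le : (∫ x in (-a)..a, Psi1 μ1 μ2 ε (Vr s0) (vb x s0) / p x *
        (kx * (u x s0).1 - sx * (uxx x s0).1) ^ 2) ≤ 0 := by
      rw [← neg_nonneg, ← intervalIntegral.integral_neg]
      apply intervalIntegral.integral_nonneg haa
      intro x hx
      have h0 : 0 ≤ nreg ε (Mvec μ1 μ2 (Vr s0 • vb x s0)) := Real.sqrt_nonneg _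
      have hP : Psi1 μ1 μ2 ε (Vr s0) (vb x s0) ≤ 0 := by
        unfold Psi1
        exact mul_nonpos_of_nonpos_of_nonneg
          (neg_nonpos.mpr (one_div_nonneg.mpr hVrpos.le))
          (div_nonneg h0 (sq_nonneg _))
      have hode : Psi1 μ1 μ2 ε (Vr s0) (vb x s0) / p x ≤ 0 := by
        rw [div_eq_mul_inv]
        exact mul_nonpos_of_nonpos_of_nonneg hP (inv_nonneg.mpr (hppos x hx).le)
      have hterm := mul_nonpos_of_nonpos_of_nonneg hode
        (sq_nonneg (kx * (u x s0).1 - sx * (uxx x s0).1))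
      linarith
    have hB2le : (∫ x in (-a)..a, Psi2 μ1 μ2 ε (Vr s0) (vb x s0) / p x *
        (ky * (u x s0).2 - sy * (uxx x s0).2) ^ 2) ≤ 0 := by
      rw [← neg_nonneg, ← intervalIntegral.integral_neg]
      apply intervalIntegral.integral_nonneg haa
      intro x hx
      have h0 : 0 ≤ nreg ε (Mvec μ1 μ2 (Vr s0 • vb x s0)) := Real.sqrt_nonneg _
      have hP : Psi2 μ1 μ2 ε (Vr s0) (vb x s0) ≤ 0 := by
        unfold Psi2
        exact mul_nonpos_of_nonpos_of_nonneg
          (neg_nonpos.mpr (one_div_nonneg.mpr hVrpos.le))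
          (div_nonneg h0 (sq_nonneg _))
      have hode : Psi2 μ1 μ2 ε (Vr s0) (vb x s0) / p x ≤ 0 := by
        rw [div_eq_mul_inv]
        exact mul_nonpos_of_nonpos_of_nonneg hP (inv_nonneg.mpr (hppos x hx).le)
      have hterm := mul_nonpos_of_nonpos_of_nonneg hode
        (sq_nonneg (ky * (u x s0).2 - sy * (uxx x s0).2))
      linarith
    rw [hval1, hval2, hzero1, hzero2, hsC]
    have hBcomb := hsB ▸ (add_le_add hB1le hB2le)
    linarith [hsB, hB1le, hB2le]
end

section
/- Let u = (u_x, u_y) ∈ C²([−a,a]; ℝ²) satisfy the Robin boundary conditions, and set q = (q_x, q_y) with q(x) := K u(x) − S u″(x), i.e. q_x = k_x u_x − s_x u_x″ and q_y = k_y u_y − s_y u_y″. Then the aligning moment admits the representation ∫_{−a}^{a} (x q_y(x) − u_y(x) q_x(x)) dx = ∫_{−a}^{a} x k_y u_y(x) dx + (a s_y/λ_y + s_y) u_y(a) − (a s_y/λ_y + s_y) u_y(−a) − ∫_{−a}^{a} k_x u_x(x) u_y(x) dx − (s_x/λ_x) u_y(a) u_x(a) − (s_x/λ_x) u_y(−a)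 u_x(−a) − ∫_{−a}^{a} s_x u_x′(x) u_y′(x) dx. -/
open Set MeasureTheory intervalIntegral

/-- Integration by parts on `[-a, a]` with derivatives within `Icc`. -/
lemma parts_aux (a : ℝ) (ha : 0 < a) (f g df dg : ℝ → ℝ)
    (hf : ∀ x ∈ Icc (-a) a, HasDerivWithinAt f (df x) (Icc (-a) a) x)
    (hg : ∀ x ∈ Icc (-a) a, HasDerivWithinAt g (dg x) (Icc (-a) a) x)
    (hdf : ContinuousOn df (Icc (-a) a)) (hdg : ContinuousOn dg (Icc (-a) a)) :
    ∫ x in (-a)..a, (df x * g x + f x * dg x) = f a * g a - f (-a) * g (-a) := by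
  have hle : (-a) ≤ a := by linarith
  have hfc : ContinuousOn f (Icc (-a) a) := fun x hx => (hf x hx).continuousWithinAt
  have hgc : ContinuousOn g (Icc (-a) a) := fun x hx => (hg x hx).continuousWithinAt
  apply intervalIntegral.integral_eq_sub_of_hasDeriv_right_of_le hle (hfc.mul hgc)
  · intro x hx
    have hmem : Icc (-a) a ∈ nhds x := Icc_mem_nhds hx.1 hx.2
    have hfx : HasDerivAt f (df x) x := (hf x (Ioo_subset_Icc_self hx)).hasDerivAt hmem
    have hgx : HasDerivAt g (dg x) x := (hg x (Ioo_subset_Icc_self hx)).hasDerivAt hmem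
    exact (hfx.mul hgx).hasDerivWithinAt.mono (fun y hy => trivial) |>.mono_of_mem_nhdsWithin
      (nhdsWithin_le_nhds hmem)
  · exact ((hdf.mul hgc).add (hfc.mul hdg)).intervalIntegrable_of_Icc hle

/-- Aligning-moment representation
`∫ (x q_y − u_y q_x) dx = ∫ x k_y u_y dx + (a s_y/λ_y + s_y) u_y(a)
 − (a s_y/λ_y + s_y) u_y(−a) − ∫ k_x u_x u_y dx − (s_x/λ_x) u_y(a) u_x(a)
 − (s_x/λ_x) u_y(−a) u_x(−a) − ∫ s_x u_x′ u_y′ dx`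
under the Robin boundary conditions, where `q = K u − S u″`. -/
theorem statement_8 (a kx ky sx sy lamx lamy : ℝ)
    (ha : 0 < a)
    (hkx : 0 < kx) (hky : 0 < ky) (hsx : 0 < sx) (hsy : 0 < sy)
    (hlamx : 0 < lamx) (hlamy : 0 < lamy)
    -- u ∈ C²([−a,a]; ℝ²) with derivatives du, ddu
    (u du ddu : ℝ → ℝ × ℝ)
    (hdu : ∀ x ∈ Icc (-a) a, HasDerivWithinAt u (du x) (Icc (-a) a) x)
    (hddu : ∀ x ∈ Icc (-a) a, HasDerivWithinAt du (ddu x) (Icc (-a) a) x)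
    (hdduC : ContinuousOn ddu (Icc (-a) a))
    -- Robin boundary conditions
    (hBCa1 : lamx * (du a).1 + (u a).1 = 0) (hBCa2 : lamy * (du a).2 + (u a).2 = 0)
    (hBCma1 : lamx * (du (-a)).1 - (u (-a)).1 = 0)
    (hBCma2 : lamy * (du (-a)).2 - (u (-a)).2 = 0) :
    (∫ x in (-a)..a,
        (x * (ky * (u x).2 - sy * (ddu x).2) -
          (u x).2 * (kx * (u x).1 - sx * (ddu x).1))) =
      (∫ x in (-a)..a, x * ky * (u x).2) +
      (a * sy / lamy + sy) * (u a).2 - (a * sy / lamy + sy) * (u (-a)).2 -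
      (∫ x in (-a)..a, kx * (u x).1 * (u x).2) -
      sx / lamx * (u a).2 * (u a).1 - sx / lamx * (u (-a)).2 * (u (-a)).1 -
      (∫ x in (-a)..a, sx * (du x).1 * (du x).2) := by
  have hle : (-a) ≤ a := by linarith
  -- component derivatives
  have hu1 : ∀ x ∈ Icc (-a) a, HasDerivWithinAt (fun y => (u y).1) ((du x).1) (Icc (-a) a) x :=
    fun x hx => (ContinuousLinearMap.fst ℝ ℝ ℝ).hasFDerivAt.comp_hasDerivWithinAt x (hdu x hx)
  have hu2 : ∀ x ∈ Icc (-a) a, HasDerivWithinAt (fun y => (u y).2) ((du x).2) (Icc (-a) a) x :=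
    fun x hx => (ContinuousLinearMap.snd ℝ ℝ ℝ).hasFDerivAt.comp_hasDerivWithinAt x (hdu x hx)
  have hdu1 : ∀ x ∈ Icc (-a) a, HasDerivWithinAt (fun y => (du y).1) ((ddu x).1) (Icc (-a) a) x :=
    fun x hx => (ContinuousLinearMap.fst ℝ ℝ ℝ).hasFDerivAt.comp_hasDerivWithinAt x (hddu x hx)
  have hdu2 : ∀ x ∈ Icc (-a) a, HasDerivWithinAt (fun y => (du y).2) ((ddu x).2) (Icc (-a) a) x :=
    fun x hx => (ContinuousLinearMap.snd ℝ ℝ ℝ).hasFDerivAt.comp_hasDerivWithinAt x (hddu x hx)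
  -- continuity
  have cu1 : ContinuousOn (fun y => (u y).1) (Icc (-a) a) := fun x hx => (hu1 x hx).continuousWithinAt
  have cu2 : ContinuousOn (fun y => (u y).2) (Icc (-a) a) := fun x hx => (hu2 x hx).continuousWithinAt
  have cdu1 : ContinuousOn (fun y => (du y).1) (Icc (-a) a) := fun x hx => (hdu1 x hx).continuousWithinAt
  have cdu2 : ContinuousOn (fun y => (du y).2) (Icc (-a) a) := fun x hx => (hdu2 x hx).continuousWithinAt
  have cddu1 : ContinuousOn (fun y => (ddu y).1) (Icc (-a) a) := hdduC.fst
  have cddu2 : ContinuousOn (fun y => (ddu y).2) (Icc (-a) a) := hdduC.snd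
  have cid : ContinuousOn (fun y : ℝ => y) (Icc (-a) a) := continuousOn_id
  have cone : ContinuousOn (fun _ : ℝ => (1:ℝ)) (Icc (-a) a) := continuousOn_const
  -- integration by parts 1:  ∫ (1 * du_y + x * ddu_y) = a du_y(a) - (-a) du_y(-a)
  have hP1 : ∫ x in (-a)..a, ((1:ℝ) * (du x).2 + x * (ddu x).2)
      = a * (du a).2 - (-a) * (du (-a)).2 := by
    apply parts_aux a ha (fun y => y) (fun y => (du y).2) (fun _ => 1) (fun y => (ddu y).2)
      (fun x _ => hasDerivWithinAt_id x _) hdu2 cone cddu2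
  -- FTC:  ∫ du_y = u_y(a) - u_y(-a)
  have hP0 : ∫ x in (-a)..a, (du x).2 = (u a).2 - (u (-a)).2 := by
    apply intervalIntegral.integral_eq_sub_of_hasDeriv_right_of_le hle cu2
    · intro x hx
      have hmem : Icc (-a) a ∈ nhds x := Icc_mem_nhds hx.1 hx.2
      exact (((hu2 x (Ioo_subset_Icc_self hx)).hasDerivAt hmem).hasDerivWithinAt).mono_of_mem_nhdsWithin
        (nhdsWithin_le_nhds hmem)
    · exact cdu2.intervalIntegrable_of_Icc hle
  -- integration by parts 2:  ∫ (du_y * du_x + u_y * ddu_x) = u_y(a) du_x(a) - u_y(-a) du_x(-a)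
  have hP2 : ∫ x in (-a)..a, ((du x).2 * (du x).1 + (u x).2 * (ddu x).1)
      = (u a).2 * (du a).1 - (u (-a)).2 * (du (-a)).1 := by
    apply parts_aux a ha (fun y => (u y).2) (fun y => (du y).1) (fun y => (du y).2)
      (fun y => (ddu y).1) hu2 hdu1 cdu2 cddu1
  -- integrability
  have i1 : IntervalIntegrable (fun x => x * ky * (u x).2) volume (-a) a :=
    (((cid.mul continuousOn_const).mul cu2)).intervalIntegrable_of_Icc hle
  have i2 : IntervalIntegrable (fun x => (1:ℝ) * (du x).2 + x * (ddu x).2) volume (-a) a :=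
    ((cone.mul cdu2).add (cid.mul cddu2)).intervalIntegrable_of_Icc hle
  have i0 : IntervalIntegrable (fun x => (du x).2) volume (-a) a :=
    cdu2.intervalIntegrable_of_Icc hle
  have i3 : IntervalIntegrable (fun x => kx * (u x).1 * (u x).2) volume (-a) a :=
    ((continuousOn_const.mul cu1).mul cu2).intervalIntegrable_of_Icc hle
  have i4 : IntervalIntegrable (fun x => (du x).2 * (du x).1 + (u x).2 * (ddu x).1)
      volume (-a) a :=
    ((cdu2.mul cdu1).add (cu2.mul cddu1)).intervalIntegrable_of_Icc hle
  have i5 : IntervalIntegrable (fun x => sx * (du x).1 * (du x).2) volume (-a) a :=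
    ((continuousOn_const.mul cdu1).mul cdu2).intervalIntegrable_of_Icc hle
  -- split the left integral
  have hsplit : (∫ x in (-a)..a,
        (x * (ky * (u x).2 - sy * (ddu x).2) -
          (u x).2 * (kx * (u x).1 - sx * (ddu x).1)))
      = (∫ x in (-a)..a, x * ky * (u x).2)
        - sy * ((∫ x in (-a)..a, ((1:ℝ) * (du x).2 + x * (ddu x).2))
                - (∫ x in (-a)..a, (du x).2))
        - (∫ x in (-a)..a, kx * (u x).1 * (u x).2)
        + sx * ((∫ x in (-a)..a, ((du x).2 * (du x).1 + (u x).2 * (ddu x).1)))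
        - sx * (∫ x in (-a)..a, (du x).2 * (du x).1) := by
    have i6 : IntervalIntegrable (fun x => (du x).2 * (du x).1) volume (-a) a :=
      (cdu2.mul cdu1).intervalIntegrable_of_Icc hle
    rw [← intervalIntegral.integral_sub i2 i0, ← intervalIntegral.integral_const_mul,
      ← intervalIntegral.integral_const_mul, ← intervalIntegral.integral_const_mul,
      ← intervalIntegral.integral_sub i1, ← intervalIntegral.integral_sub _ i3,
      ← intervalIntegral.integral_add, ← intervalIntegral.integral_sub]
    · apply intervalIntegral.integral_congr
      intro x hx; ring
    · exact ((i1.sub ((i2.sub i0).const_mul sy)).sub i3).add (i4.const_mul sx)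
    · exact i6.const_mul sx
    · exact (i1.sub ((i2.sub i0).const_mul sy)).sub i3
    · exact i4.const_mul sx
    · exact i1.sub ((i2.sub i0).const_mul sy)
    · exact (i2.sub i0).const_mul sy
  have hlast : (∫ x in (-a)..a, sx * (du x).1 * (du x).2)
      = sx * ∫ x in (-a)..a, (du x).2 * (du x).1 := by
    rw [← intervalIntegral.integral_const_mul]
    apply intervalIntegral.integral_congr; intro x hx; ring
  -- boundary values from Robin conditions
  have hda2 : (du a).2 = -(u a).2 / lamy := by field_simp; linarith
  have hdma2 : (du (-a)).2 = (u (-a)).2 / lamy := by field_simp; linarith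
  have hda1 : (du a).1 = -(u a).1 / lamx := by field_simp; linarith
  have hdma1 : (du (-a)).1 = (u (-a)).1 / lamx := by field_simp; linarith
  rw [hsplit, hP1, hP0, hP2, hlast, hda2, hdma2, hda1, hdma1]
  field_simp
  rw [show (∫ x in (-a)..a, ky * x * (u x).2) = ∫ x in (-a)..a, x * ky * (u x).2 from by
    congr 1; funext x; ring]
  ring
end

section
/- For every u ∈ C²([−a,a]; ℝ²) satisfying the Robin boundary conditions, ∫_{−a}^{a} ‖K u(x) − S u″(x)‖₂² dx ≥ ∫_{−a}^{a} ( u(x)ᵀ K² u(x) + 2 u′(x)ᵀ K S u′(x) + u″(x)ᵀ S² u″(x) ) dx. Consequently there exists γ₀ > 0, depending only on K and S (e.g. γ₀ = min{min(k_x, k_y)², 2 min(k_x s_x, k_y s_y)}), such that ∫_{−a}^{a} ‖K u(x) − S u″(x)‖₂² dx ≥ γ₀ ∫_{−a}^{a} (‖u(x)‖₂² + ‖u′(x)‖₂²) dx. -/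
open Set MeasureTheory intervalIntegral

private lemma deriv_fst {f : ℝ → ℝ × ℝ} {f' : ℝ × ℝ} {s : Set ℝ} {x : ℝ}
    (h : HasDerivWithinAt f f' s x) :
    HasDerivWithinAt (fun x => (f x).1) f'.1 s x := by
  simpa using h.hasFDerivWithinAt.fst.hasDerivWithinAt

private lemma deriv_snd {f : ℝ → ℝ × ℝ} {f' : ℝ × ℝ} {s : Set ℝ} {x : ℝ}
    (h : HasDerivWithinAt f f' s x) :
    HasDerivWithinAt (fun x => (f x).2) f'.2 s x := by
  simpa using h.hasFDerivWithinAt.snd.hasDerivWithinAt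

/-- Scalar integration-by-parts lemma: with Robin boundary conditions,
`∫ (f f'' + f'^2) ≤ 0`. -/
private lemma key_ibp (a lam : ℝ) (ha : 0 < a) (hlam : 0 < lam)
    (f g h : ℝ → ℝ)
    (hf : ∀ x ∈ Icc (-a) a, HasDerivWithinAt f (g x) (Icc (-a) a) x)
    (hg : ∀ x ∈ Icc (-a) a, HasDerivWithinAt g (h x) (Icc (-a) a) x)
    (hh : ContinuousOn h (Icc (-a) a))
    (hb1 : lam * g a + f a = 0) (hb2 : lam * g (-a) - f (-a) = 0) :
    ∫ x in (-a)..a, (f x * h x + g x ^ 2) ≤ 0 := by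
  have hle : (-a : ℝ) ≤ a := by linarith
  have hIcc : uIcc (-a) a = Icc (-a) a := uIcc_of_le hle
  have hcf : ContinuousOn f (Icc (-a) a) := fun x hx => (hf x hx).continuousWithinAt
  have hcg : ContinuousOn g (Icc (-a) a) := fun x hx => (hg x hx).continuousWithinAt
  have hci : ContinuousOn (fun x => f x * h x + g x ^ 2) (Icc (-a) a) :=
    (hcf.mul hh).add (hcg.pow 2)
  have hint : IntervalIntegrable (fun x => f x * h x + g x ^ 2) volume (-a) a :=
    (hIcc ▸ hci).intervalIntegrable
  have heq : ∫ x in (-a)..a, (f x * h x + g x ^ 2) = f a * g a - f (-a) * g (-a) := by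
    apply integral_eq_sub_of_hasDeriv_right_of_le hle (hcf.mul hcg) _ hint
    intro x hx
    have hx' : x ∈ Icc (-a) a := mem_Icc.2 ⟨le_of_lt hx.1, le_of_lt hx.2⟩
    have hmem : Icc (-a) a ∈ nhds x := Icc_mem_nhds hx.1 hx.2
    have h1 : HasDerivAt f (g x) x := (hf x hx').hasDerivAt hmem
    have h2 : HasDerivAt g (h x) x := (hg x hx').hasDerivAt hmem
    have := (h1.mul h2).hasDerivWithinAt (s := Ioi x)
    convert this using 1
    ring
  rw [heq]
  have e1 : f a = -(lam * g a) := by linarith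
  have e2 : f (-a) = lam * g (-a) := by linarith
  rw [e1, e2]
  nlinarith [sq_nonneg (g a), sq_nonneg (g (-a))]

/-- Coercivity of the contact force density:
`∫ ‖Ku − Su″‖₂² dx ≥ ∫ (uᵀK²u + 2u′ᵀKSu′ + u″ᵀS²u″) dx`, and consequently
there exists `γ₀ > 0`, depending only on `K` and `S`, with
`∫ ‖Ku − Su″‖₂² dx ≥ γ₀ ∫ (‖u‖₂² + ‖u′‖₂²) dx`, for every `u ∈ C²`
satisfying the Robin boundary conditions. -/
theorem statement_9 (a kx ky sx sy lamx lamy : ℝ)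
    (ha : 0 < a)
    (hkx : 0 < kx) (hky : 0 < ky) (hsx : 0 < sx) (hsy : 0 < sy)
    (hlamx : 0 < lamx) (hlamy : 0 < lamy) :
    -- first inequality
    (∀ u du ddu : ℝ → ℝ × ℝ,
      (∀ x ∈ Icc (-a) a, HasDerivWithinAt u (du x) (Icc (-a) a) x) →
      (∀ x ∈ Icc (-a) a, HasDerivWithinAt du (ddu x) (Icc (-a) a) x) →
      ContinuousOn ddu (Icc (-a) a) →
      (lamx * (du a).1 + (u a).1 = 0 ∧ lamy * (du a).2 + (u a).2 = 0) →
      (lamx * (du (-a)).1 - (u (-a)).1 = 0 ∧ lamy * (du (-a)).2 - (u (-a)).2 = 0) →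
      (∫ x in (-a)..a,
          ((kx * (u x).1 - sx * (ddu x).1) ^ 2 +
            (ky * (u x).2 - sy * (ddu x).2) ^ 2)) ≥
        ∫ x in (-a)..a,
          (kx ^ 2 * (u x).1 ^ 2 + ky ^ 2 * (u x).2 ^ 2 +
            2 * (kx * sx * (du x).1 ^ 2 + ky * sy * (du x).2 ^ 2) +
            sx ^ 2 * (ddu x).1 ^ 2 + sy ^ 2 * (ddu x).2 ^ 2)) ∧
    -- coercivity constant depending only on K and S
    (∃ γ0 > (0:ℝ),
      ∀ u du ddu : ℝ → ℝ × ℝ,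
        (∀ x ∈ Icc (-a) a, HasDerivWithinAt u (du x) (Icc (-a) a) x) →
        (∀ x ∈ Icc (-a) a, HasDerivWithinAt du (ddu x) (Icc (-a) a) x) →
        ContinuousOn ddu (Icc (-a) a) →
        (lamx * (du a).1 + (u a).1 = 0 ∧ lamy * (du a).2 + (u a).2 = 0) →
        (lamx * (du (-a)).1 - (u (-a)).1 = 0 ∧
          lamy * (du (-a)).2 - (u (-a)).2 = 0) →
        (∫ x in (-a)..a,
            ((kx * (u x).1 - sx * (ddu x).1) ^ 2 +
              (ky * (u x).2 - sy * (ddu x).2) ^ 2)) ≥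
          γ0 * ∫ x in (-a)..a,
            ((u x).1 ^ 2 + (u x).2 ^ 2 + (du x).1 ^ 2 + (du x).2 ^ 2)) := by
  have hle : (-a : ℝ) ≤ a := by linarith
  have hIcc : uIcc (-a) a = Icc (-a) a := uIcc_of_le hle
  -- first part as a standalone fact
  have main : ∀ u du ddu : ℝ → ℝ × ℝ,
      (∀ x ∈ Icc (-a) a, HasDerivWithinAt u (du x) (Icc (-a) a) x) →
      (∀ x ∈ Icc (-a) a, HasDerivWithinAt du (ddu x) (Icc (-a) a) x) →
      ContinuousOn ddu (Icc (-a) a) →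
      (lamx * (du a).1 + (u a).1 = 0 ∧ lamy * (du a).2 + (u a).2 = 0) →
      (lamx * (du (-a)).1 - (u (-a)).1 = 0 ∧ lamy * (du (-a)).2 - (u (-a)).2 = 0) →
      (∫ x in (-a)..a,
          ((kx * (u x).1 - sx * (ddu x).1) ^ 2 +
            (ky * (u x).2 - sy * (ddu x).2) ^ 2)) ≥
        ∫ x in (-a)..a,
          (kx ^ 2 * (u x).1 ^ 2 + ky ^ 2 * (u x).2 ^ 2 +
            2 * (kx * sx * (du x).1 ^ 2 + ky * sy * (du x).2 ^ 2) +
            sx ^ 2 * (ddu x).1 ^ 2 + sy ^ 2 * (ddu x).2 ^ 2) := by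
    intro u du ddu hu hdu hddu hb1 hb2
    have hu1 := fun x hx => deriv_fst (hu x hx)
    have hu2 := fun x hx => deriv_snd (hu x hx)
    have hdu1 := fun x hx => deriv_fst (hdu x hx)
    have hdu2 := fun x hx => deriv_snd (hdu x hx)
    have hddu1 : ContinuousOn (fun x => (ddu x).1) (Icc (-a) a) :=
      continuous_fst.comp_continuousOn hddu
    have hddu2 : ContinuousOn (fun x => (ddu x).2) (Icc (-a) a) :=
      continuous_snd.comp_continuousOn hddu
    have I1 := key_ibp a lamx ha hlamx _ _ _ hu1 hdu1 hddu1 hb1.1 hb2.1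
    have I2 := key_ibp a lamy ha hlamy _ _ _ hu2 hdu2 hddu2 hb1.2 hb2.2
    -- continuity / integrability
    have hcu : ContinuousOn u (Icc (-a) a) := fun x hx => (hu x hx).continuousWithinAt
    have hcdu : ContinuousOn du (Icc (-a) a) := fun x hx => (hdu x hx).continuousWithinAt
    have hcu1 : ContinuousOn (fun x => (u x).1) (Icc (-a) a) :=
      continuous_fst.comp_continuousOn hcu
    have hcu2 : ContinuousOn (fun x => (u x).2) (Icc (-a) a) :=
      continuous_snd.comp_continuousOn hcu
    have hcdu1 : ContinuousOn (fun x => (du x).1) (Icc (-a) a) :=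
      continuous_fst.comp_continuousOn hcdu
    have hcdu2 : ContinuousOn (fun x => (du x).2) (Icc (-a) a) :=
      continuous_snd.comp_continuousOn hcdu
    have hintL : IntervalIntegrable (fun x =>
        (kx * (u x).1 - sx * (ddu x).1) ^ 2 + (ky * (u x).2 - sy * (ddu x).2) ^ 2)
        volume (-a) a := by
      apply ContinuousOn.intervalIntegrable
      rw [hIcc]
      exact (((continuousOn_const.mul hcu1).sub (continuousOn_const.mul hddu1)).pow 2).add
        (((continuousOn_const.mul hcu2).sub (continuousOn_const.mul hddu2)).pow 2)
    have hintR : IntervalIntegrable (fun x =>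
        kx ^ 2 * (u x).1 ^ 2 + ky ^ 2 * (u x).2 ^ 2 +
          2 * (kx * sx * (du x).1 ^ 2 + ky * sy * (du x).2 ^ 2) +
          sx ^ 2 * (ddu x).1 ^ 2 + sy ^ 2 * (ddu x).2 ^ 2) volume (-a) a := by
      apply ContinuousOn.intervalIntegrable
      rw [hIcc]
      fun_prop
    have hintI1 : IntervalIntegrable (fun x => (u x).1 * (ddu x).1 + (du x).1 ^ 2)
        volume (-a) a := by
      apply ContinuousOn.intervalIntegrable
      rw [hIcc]
      exact (hcu1.mul hddu1).add (hcdu1.pow 2)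
    have hintI2 : IntervalIntegrable (fun x => (u x).2 * (ddu x).2 + (du x).2 ^ 2)
        volume (-a) a := by
      apply ContinuousOn.intervalIntegrable
      rw [hIcc]
      exact (hcu2.mul hddu2).add (hcdu2.pow 2)
    rw [ge_iff_le, ← sub_nonneg, ← intervalIntegral.integral_sub hintL hintR]
    have hrw : ∫ x in (-a)..a,
        ((kx * (u x).1 - sx * (ddu x).1) ^ 2 + (ky * (u x).2 - sy * (ddu x).2) ^ 2 -
          (kx ^ 2 * (u x).1 ^ 2 + ky ^ 2 * (u x).2 ^ 2 +
            2 * (kx * sx * (du x).1 ^ 2 + ky * sy * (du x).2 ^ 2) +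
            sx ^ 2 * (ddu x).1 ^ 2 + sy ^ 2 * (ddu x).2 ^ 2)) =
        (-(2 * kx * sx)) * (∫ x in (-a)..a, ((u x).1 * (ddu x).1 + (du x).1 ^ 2)) +
        (-(2 * ky * sy)) * (∫ x in (-a)..a, ((u x).2 * (ddu x).2 + (du x).2 ^ 2)) := by
      rw [← intervalIntegral.integral_const_mul, ← intervalIntegral.integral_const_mul,
        ← intervalIntegral.integral_add (hintI1.const_mul _) (hintI2.const_mul _)]
      apply intervalIntegral.integral_congr
      intro x _
      ring
    rw [hrw]
    nlinarith [mul_pos hkx hsx, mul_pos hky hsy]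
  refine ⟨main, min (min kx ky ^ 2) (2 * min (kx * sx) (ky * sy)), ?_, ?_⟩
  · apply lt_min
    · positivity
    · apply mul_pos two_pos (lt_min (mul_pos hkx hsx) (mul_pos hky hsy))
  · intro u du ddu hu hdu hddu hb1 hb2
    set γ0 := min (min kx ky ^ 2) (2 * min (kx * sx) (ky * sy)) with hγ0
    have h1 := main u du ddu hu hdu hddu hb1 hb2
    refine le_trans ?_ h1
    rw [← intervalIntegral.integral_const_mul]
    -- continuity for integrability
    have hcu : ContinuousOn u (Icc (-a) a) := fun x hx => (hu x hx).continuousWithinAt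
    have hcdu : ContinuousOn du (Icc (-a) a) := fun x hx => (hdu x hx).continuousWithinAt
    have hcu1 : ContinuousOn (fun x => (u x).1) (Icc (-a) a) :=
      continuous_fst.comp_continuousOn hcu
    have hcu2 : ContinuousOn (fun x => (u x).2) (Icc (-a) a) :=
      continuous_snd.comp_continuousOn hcu
    have hcdu1 : ContinuousOn (fun x => (du x).1) (Icc (-a) a) :=
      continuous_fst.comp_continuousOn hcdu
    have hcdu2 : ContinuousOn (fun x => (du x).2) (Icc (-a) a) :=
      continuous_snd.comp_continuousOn hcdu
    have hddu1 : ContinuousOn (fun x => (ddu x).1) (Icc (-a) a) :=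
      continuous_fst.comp_continuousOn hddu
    have hddu2 : ContinuousOn (fun x => (ddu x).2) (Icc (-a) a) :=
      continuous_snd.comp_continuousOn hddu
    apply intervalIntegral.integral_mono_on hle
    · apply ContinuousOn.intervalIntegrable
      rw [hIcc]
      exact continuousOn_const.mul
        ((((hcu1.pow 2).add (hcu2.pow 2)).add (hcdu1.pow 2)).add (hcdu2.pow 2))
    · apply ContinuousOn.intervalIntegrable
      rw [hIcc]
      exact ((((continuousOn_const.mul (hcu1.pow 2)).add
        (continuousOn_const.mul (hcu2.pow 2))).add
        (continuousOn_const.mul ((continuousOn_const.mul (hcdu1.pow 2)).add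
          (continuousOn_const.mul (hcdu2.pow 2))))).add
        (continuousOn_const.mul (hddu1.pow 2))).add
        (continuousOn_const.mul (hddu2.pow 2))
    · have hm : (0:ℝ) ≤ min kx ky := (lt_min hkx hky).le
      have g1 : γ0 ≤ kx ^ 2 :=
        (min_le_left _ _).trans (pow_le_pow_left₀ hm (min_le_left kx ky) 2)
      have g2 : γ0 ≤ ky ^ 2 :=
        (min_le_left _ _).trans (pow_le_pow_left₀ hm (min_le_right kx ky) 2)
      have g3 : γ0 ≤ 2 * (kx * sx) :=
        (min_le_right _ _).trans (by linarith [min_le_left (kx*sx) (ky*sy)])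
      have g4 : γ0 ≤ 2 * (ky * sy) :=
        (min_le_right _ _).trans (by linarith [min_le_right (kx*sx) (ky*sy)])
      intro x _
      have t1 : γ0 * (u x).1 ^ 2 ≤ kx ^ 2 * (u x).1 ^ 2 :=
        mul_le_mul_of_nonneg_right g1 (sq_nonneg _)
      have t2 : γ0 * (u x).2 ^ 2 ≤ ky ^ 2 * (u x).2 ^ 2 :=
        mul_le_mul_of_nonneg_right g2 (sq_nonneg _)
      have t3 : γ0 * (du x).1 ^ 2 ≤ 2 * (kx * sx) * (du x).1 ^ 2 :=
        mul_le_mul_of_nonneg_right g3 (sq_nonneg _)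
      have t4 : γ0 * (du x).2 ^ 2 ≤ 2 * (ky * sy) * (du x).2 ^ 2 :=
        mul_le_mul_of_nonneg_right g4 (sq_nonneg _)
      have t5 : (0:ℝ) ≤ sx ^ 2 * (ddu x).1 ^ 2 := by positivity
      have t6 : (0:ℝ) ≤ sy ^ 2 * (ddu x).2 ^ 2 := by positivity
      have e1 : γ0 * ((u x).1 ^ 2 + (u x).2 ^ 2 + (du x).1 ^ 2 + (du x).2 ^ 2)
          = γ0 * (u x).1 ^ 2 + γ0 * (u x).2 ^ 2 + γ0 * (du x).1 ^ 2 +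
            γ0 * (du x).2 ^ 2 := by ring
      have e2 : kx ^ 2 * (u x).1 ^ 2 + ky ^ 2 * (u x).2 ^ 2 +
            2 * (kx * sx * (du x).1 ^ 2 + ky * sy * (du x).2 ^ 2) +
            sx ^ 2 * (ddu x).1 ^ 2 + sy ^ 2 * (ddu x).2 ^ 2
          = kx ^ 2 * (u x).1 ^ 2 + ky ^ 2 * (u x).2 ^ 2 +
            (2 * (kx * sx) * (du x).1 ^ 2 + 2 * (ky * sy) * (du x).2 ^ 2) +
            sx ^ 2 * (ddu x).1 ^ 2 + sy ^ 2 * (ddu x).2 ^ 2 := by ring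
      rw [e1, e2]
      linarith
end

section
/- There exist constants β₂, β₃ > 0, depending only on a, K, S and Λ, such that for every u = (u_x, u_y) ∈ C²([−a,a]; ℝ²) satisfying the Robin boundary conditions, the aligning moment M_z(u) := ∫_{−a}^{a} (x q_y(x) − u_y(x) q_x(x)) dx, with q_x = k_x u_x − s_x u_x″ and q_y = k_y u_y − s_y u_y″, satisfies |M_z(u)| ≤ β₂ ‖u‖_{H¹} + β₃ ‖u‖²_{H¹}. -/
open Set MeasureTheory intervalIntegral

/-- FTC for functions with a derivative within `Icc b c`. -/
lemma my_ftc {b c : ℝ} (hbc : b ≤ c) (f f' : ℝ → ℝ)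
    (hf : ∀ x ∈ Icc b c, HasDerivWithinAt f (f' x) (Icc b c) x)
    (hcont' : ContinuousOn f' (Icc b c)) :
    ∫ y in b..c, f' y = f c - f b := by
  apply integral_eq_sub_of_hasDeriv_right_of_le hbc
    (fun x hx => (hf x hx).continuousWithinAt)
  · intro x hx
    exact ((hf x (Ioo_subset_Icc_self hx)).hasDerivAt
      (Icc_mem_nhds hx.1 hx.2)).hasDerivWithinAt
  · rw [show Icc b c = uIcc b c from (uIcc_of_le hbc).symm] at hcont'
    exact hcont'.intervalIntegrable

lemma sup_sq (a : ℝ) (ha : 0 < a) (v dv : ℝ → ℝ)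
    (hv : ∀ x ∈ Icc (-a) a, HasDerivWithinAt v (dv x) (Icc (-a) a) x)
    (hdv : ContinuousOn dv (Icc (-a) a)) :
    ∀ t ∈ Icc (-a) a, v t ^ 2 ≤ ((1 + 2*a)/a) * ∫ x in (-a)..a, (v x ^ 2 + dv x ^ 2) := by
  have hle : (-a : ℝ) ≤ a := by linarith
  have hvc : ContinuousOn v (Icc (-a) a) := fun x hx => (hv x hx).continuousWithinAt
  set g : ℝ → ℝ := fun x => (1 + 2*a) * (v x ^ 2 + dv x ^ 2) with hg
  have hgc : ContinuousOn g (Icc (-a) a) :=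
    (continuousOn_const.mul (((hvc.pow 2).add (hdv.pow 2))))
  have hgnn : ∀ x ∈ Icc (-a) a, 0 ≤ g x := by
    intro x hx; have := sq_nonneg (v x); have := sq_nonneg (dv x); positivity
  have hgint : ∀ p q, p ∈ Icc (-a) a → q ∈ Icc (-a) a →
      IntervalIntegrable g volume p q := by
    intro p q hp hq
    apply ContinuousOn.intervalIntegrable
    exact hgc.mono (uIcc_subset_Icc hp hq)
  have hginteq : (∫ x in (-a)..a, g x) =
      (1 + 2*a) * ∫ x in (-a)..a, (v x ^ 2 + dv x ^ 2) := integral_const_mul _ _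
  intro t ht
  rcases le_total 0 t with h0 | h0
  · -- use w x = (x+a) * v x ^ 2 on [-a, t]
    have hsub : Icc (-a) t ⊆ Icc (-a) a := Icc_subset_Icc le_rfl ht.2
    have hat : (-a : ℝ) ≤ t := ht.1
    have hw : ∀ x ∈ Icc (-a) t,
        HasDerivWithinAt (fun x => (x + a) * v x ^ 2)
          (v x ^ 2 + (x + a) * (2 * v x * dv x)) (Icc (-a) t) x := by
      intro x hx
      have h1 : HasDerivWithinAt (fun x : ℝ => x + a) 1 (Icc (-a) t) x :=
        (hasDerivWithinAt_id x _).add_const a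
      have h2 : HasDerivWithinAt (fun x => v x ^ 2) (2 * v x ^ 1 * dv x) (Icc (-a) t) x :=
        ((hv x (hsub hx)).mono hsub).pow 2
      have : HasDerivWithinAt (fun y => (y + a) * v y ^ 2)
          (1 * v x ^ 2 + (x + a) * (2 * v x ^ 1 * dv x)) (Icc (-a) t) x := h1.fun_mul h2
      convert this using 1; ring
    have hwc : ContinuousOn (fun x => v x ^ 2 + (x + a) * (2 * v x * dv x)) (Icc (-a) t) := by
      apply ContinuousOn.add ((hvc.mono hsub).pow 2)
      exact (continuousOn_id.add continuousOn_const).mul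
        ((continuousOn_const.mul (hvc.mono hsub)).mul (hdv.mono hsub))
    have hftc := my_ftc hat _ _ hw hwc
    have hmono1 : (∫ x in (-a)..t, (v x ^ 2 + (x + a) * (2 * v x * dv x))) ≤
        ∫ x in (-a)..t, g x := by
      apply integral_mono_on hat
        (ContinuousOn.intervalIntegrable
          (hwc.mono (uIcc_subset_Icc ⟨le_rfl, hat⟩ ⟨hat, le_rfl⟩)))
        (hgint _ _ ⟨le_rfl, hle⟩ (hsub ⟨hat, le_rfl⟩))
      intro x hx
      have hx' := hsub hx
      have h1 : 0 ≤ x + a := by have := hx'.1; linarith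
      have h2 : x + a ≤ 2 * a := by have := hx'.2; linarith
      have h4 : (x + a) * (2 * v x * dv x) ≤ 2 * a * (v x ^ 2 + dv x ^ 2) := by
        calc (x + a) * (2 * v x * dv x) ≤ (x + a) * (v x ^ 2 + dv x ^ 2) := by
              nlinarith [sq_nonneg (v x - dv x)]
        _ ≤ 2 * a * (v x ^ 2 + dv x ^ 2) := by nlinarith [sq_nonneg (v x), sq_nonneg (dv x)]
      simp only [hg]; nlinarith
    have hmono2 : (∫ x in (-a)..t, g x) ≤ ∫ x in (-a)..a, g x := by
      have hsplit := integral_add_adjacent_intervals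
        (hgint _ _ ⟨le_rfl, hle⟩ ht) (hgint _ _ ht ⟨hle, le_rfl⟩)
      have hnn : 0 ≤ ∫ x in t..a, g x := by
        apply integral_nonneg ht.2
        intro x hx; exact hgnn x ⟨le_trans ht.1 hx.1, hx.2⟩
      linarith
    rw [hftc] at hmono1
    have key : (t + a) * v t ^ 2 ≤ (1 + 2*a) * ∫ x in (-a)..a, (v x ^ 2 + dv x ^ 2) := by
      have : (-a + a) * v (-a) ^ 2 = 0 := by ring_nf
      rw [hginteq] at hmono2
      nlinarith [sq_nonneg (v (-a))]
    have hta : a ≤ t + a := by linarith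
    have hvt := sq_nonneg (v t)
    rw [div_mul_eq_mul_div, le_div_iff₀ ha]
    nlinarith
  · -- use w x = (a - x) * v x ^ 2 on [t, a]
    have hsub : Icc t a ⊆ Icc (-a) a := Icc_subset_Icc ht.1 le_rfl
    have hta : t ≤ a := ht.2
    have hw : ∀ x ∈ Icc t a,
        HasDerivWithinAt (fun x => (a - x) * v x ^ 2)
          (-(v x ^ 2) + (a - x) * (2 * v x * dv x)) (Icc t a) x := by
      intro x hx
      have h1 : HasDerivWithinAt (fun x : ℝ => a - x) (-1) (Icc t a) x :=
        (hasDerivWithinAt_id x _).neg.const_add a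
      have h2 : HasDerivWithinAt (fun x => v x ^ 2) (2 * v x ^ 1 * dv x) (Icc t a) x :=
        ((hv x (hsub hx)).mono hsub).pow 2
      have : HasDerivWithinAt (fun y => (a - y) * v y ^ 2)
          (-1 * v x ^ 2 + (a - x) * (2 * v x ^ 1 * dv x)) (Icc t a) x := h1.fun_mul h2
      convert this using 1; ring
    have hwc : ContinuousOn (fun x => -(v x ^ 2) + (a - x) * (2 * v x * dv x)) (Icc t a) := by
      apply ContinuousOn.add ((hvc.mono hsub).pow 2).neg
      exact (continuousOn_const.sub continuousOn_id).mul
        ((continuousOn_const.mul (hvc.mono hsub)).mul (hdv.mono hsub))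
    have hftc := my_ftc hta _ _ hw hwc
    have hneg : (∫ x in t..a, (v x ^ 2 - (a - x) * (2 * v x * dv x))) =
        -(∫ x in t..a, (-(v x ^ 2) + (a - x) * (2 * v x * dv x))) := by
      rw [← intervalIntegral.integral_neg]; congr 1; funext x; ring
    have hmono1 : (∫ x in t..a, (v x ^ 2 - (a - x) * (2 * v x * dv x))) ≤
        ∫ x in t..a, g x := by
      have hc2 : ContinuousOn (fun x => v x ^ 2 - (a - x) * (2 * v x * dv x)) (Icc t a) := by
        apply ContinuousOn.sub ((hvc.mono hsub).pow 2)
        exact (continuousOn_const.sub continuousOn_id).mul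
          ((continuousOn_const.mul (hvc.mono hsub)).mul (hdv.mono hsub))
      apply integral_mono_on hta
        (ContinuousOn.intervalIntegrable
          (hc2.mono (uIcc_subset_Icc ⟨le_rfl, hta⟩ ⟨hta, le_rfl⟩)))
        (hgint _ _ ht ⟨hle, le_rfl⟩)
      intro x hx
      have hx' := hsub hx
      have h1 : 0 ≤ a - x := by have := hx'.2; linarith
      have h2 : a - x ≤ 2 * a := by have := hx'.1; linarith
      have h4 : -((a - x) * (2 * v x * dv x)) ≤ 2 * a * (v x ^ 2 + dv x ^ 2) := by
        calc -((a - x) * (2 * v x * dv x)) = (a - x) * (-(2 * v x * dv x)) := by ring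
        _ ≤ (a - x) * (v x ^ 2 + dv x ^ 2) := by nlinarith [sq_nonneg (v x + dv x)]
        _ ≤ 2 * a * (v x ^ 2 + dv x ^ 2) := by nlinarith [sq_nonneg (v x), sq_nonneg (dv x)]
      simp only [hg]; nlinarith
    have hmono2 : (∫ x in t..a, g x) ≤ ∫ x in (-a)..a, g x := by
      have hsplit := integral_add_adjacent_intervals
        (hgint _ _ ⟨le_rfl, hle⟩ ht) (hgint _ _ ht ⟨hle, le_rfl⟩)
      have hnn : 0 ≤ ∫ x in (-a)..t, g x := by
        apply integral_nonneg ht.1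
        intro x hx; exact hgnn x ⟨hx.1, le_trans hx.2 ht.2⟩
      linarith
    rw [hneg, hftc] at hmono1
    have key : (a - t) * v t ^ 2 ≤ (1 + 2*a) * ∫ x in (-a)..a, (v x ^ 2 + dv x ^ 2) := by
      rw [hginteq] at hmono2
      nlinarith [sq_nonneg (v a)]
    have hta' : a ≤ a - t := by linarith
    have hvt := sq_nonneg (v t)
    rw [div_mul_eq_mul_div, le_div_iff₀ ha]
    nlinarith

lemma abs_mul_le_half (p q : ℝ) : |p * q| ≤ (p ^ 2 + q ^ 2) / 2 := by
  rw [abs_mul]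
  nlinarith [sq_nonneg (|p| - |q|), sq_abs p, sq_abs q, abs_nonneg p, abs_nonneg q]

set_option maxHeartbeats 1000000 in
/-- Bound on the aligning moment
`M_z(u) = ∫ (x q_y − u_y q_x) dx`, with `q = Ku − Su″`:
`|M_z(u)| ≤ β₂‖u‖_{H¹} + β₃‖u‖²_{H¹}` for every C² function satisfying the
Robin boundary conditions, with constants depending only on `a, K, S, Λ`. -/
theorem statement_13 (a kx ky sx sy lamx lamy : ℝ)
    (ha : 0 < a)
    (hkx : 0 < kx) (hky : 0 < ky) (hsx : 0 < sx) (hsy : 0 < sy)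
    (hlamx : 0 < lamx) (hlamy : 0 < lamy) :
    ∃ β2 > (0:ℝ), ∃ β3 > (0:ℝ),
      ∀ u du ddu : ℝ → ℝ × ℝ,
        (∀ x ∈ Icc (-a) a, HasDerivWithinAt u (du x) (Icc (-a) a) x) →
        (∀ x ∈ Icc (-a) a, HasDerivWithinAt du (ddu x) (Icc (-a) a) x) →
        ContinuousOn ddu (Icc (-a) a) →
        (lamx * (du a).1 + (u a).1 = 0 ∧ lamy * (du a).2 + (u a).2 = 0) →
        (lamx * (du (-a)).1 - (u (-a)).1 = 0 ∧
          lamy * (du (-a)).2 - (u (-a)).2 = 0) →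
        |∫ x in (-a)..a,
            (x * (ky * (u x).2 - sy * (ddu x).2) -
              (u x).2 * (kx * (u x).1 - sx * (ddu x).1))| ≤
          β2 * Real.sqrt (H1sq a u du) + β3 * H1sq a u du := by
  have hle : (-a : ℝ) ≤ a := by linarith
  have hc0 : (0:ℝ) < (1 + 2*a)/a := by positivity
  set c : ℝ := (1 + 2*a)/a with hc
  have hsc : 0 < Real.sqrt c := Real.sqrt_pos.mpr hc0
  refine ⟨(ky * (2*a^2) + 2*sy*(a/lamy + 1)) * Real.sqrt c, by positivity,
    kx + sx + 2*sx*c/lamx, by positivity, ?_⟩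
  intro u du ddu hu hdu hddu hR hL
  obtain ⟨hR1, hR2⟩ := hR
  obtain ⟨hL1, hL2⟩ := hL
  set ux : ℝ → ℝ := fun x => (u x).1 with hux_def
  set uy : ℝ → ℝ := fun x => (u x).2 with huy_def
  set dux : ℝ → ℝ := fun x => (du x).1 with hdux_def
  set duy : ℝ → ℝ := fun x => (du x).2 with hduy_def
  set ddux : ℝ → ℝ := fun x => (ddu x).1 with hddux_def
  set dduy : ℝ → ℝ := fun x => (ddu x).2 with hdduy_def
  -- component derivatives
  have hdx : ∀ x ∈ Icc (-a) a, HasDerivWithinAt ux (dux x) (Icc (-a) a) x :=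
    fun x hx => by have := hasFDerivAt_fst.comp_hasDerivWithinAt x (hu x hx); exact this
  have hdy : ∀ x ∈ Icc (-a) a, HasDerivWithinAt uy (duy x) (Icc (-a) a) x :=
    fun x hx => by have := hasFDerivAt_snd.comp_hasDerivWithinAt x (hu x hx); exact this
  have hddx : ∀ x ∈ Icc (-a) a, HasDerivWithinAt dux (ddux x) (Icc (-a) a) x :=
    fun x hx => by have := hasFDerivAt_fst.comp_hasDerivWithinAt x (hdu x hx); exact this
  have hddy : ∀ x ∈ Icc (-a) a, HasDerivWithinAt duy (dduy x) (Icc (-a) a) x :=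
    fun x hx => by have := hasFDerivAt_snd.comp_hasDerivWithinAt x (hdu x hx); exact this
  -- continuity
  have hcux : ContinuousOn ux (Icc (-a) a) := fun x hx => (hdx x hx).continuousWithinAt
  have hcuy : ContinuousOn uy (Icc (-a) a) := fun x hx => (hdy x hx).continuousWithinAt
  have hcdux : ContinuousOn dux (Icc (-a) a) := fun x hx => (hddx x hx).continuousWithinAt
  have hcduy : ContinuousOn duy (Icc (-a) a) := fun x hx => (hddy x hx).continuousWithinAt
  have hcddux : ContinuousOn ddux (Icc (-a) a) := continuous_fst.comp_continuousOn hddu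
  have hcdduy : ContinuousOn dduy (Icc (-a) a) := continuous_snd.comp_continuousOn hddu
  -- integrability helper
  have intg : ∀ f : ℝ → ℝ, ContinuousOn f (Icc (-a) a) →
      IntervalIntegrable f volume (-a) a := by
    intro f hf
    apply ContinuousOn.intervalIntegrable
    rwa [uIcc_of_le hle]
  set I : ℝ := H1sq a u du with hI_def
  have hIeq : I = ∫ x in (-a)..a, (ux x ^ 2 + uy x ^ 2 + dux x ^ 2 + duy x ^ 2) := rfl
  have hcfull : ContinuousOn (fun x => ux x ^ 2 + uy x ^ 2 + dux x ^ 2 + duy x ^ 2)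
      (Icc (-a) a) := (((hcux.pow 2).add (hcuy.pow 2)).add (hcdux.pow 2)).add (hcduy.pow 2)
  have hI0 : 0 ≤ I := by
    rw [hIeq]
    apply integral_nonneg hle
    intro x _; positivity
  -- sup bounds
  have hsupx : ∀ t ∈ Icc (-a) a, ux t ^ 2 ≤ c * I := by
    intro t ht
    refine (sup_sq a ha ux dux hdx hcdux t ht).trans ?_
    rw [← hc]
    apply mul_le_mul_of_nonneg_left _ hc0.le
    rw [hIeq]
    apply integral_mono_on hle (intg _ ((hcux.pow 2).add (hcdux.pow 2))) (intg _ hcfull)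
    intro x _
    simp only [Pi.add_apply, Pi.pow_apply]
    linarith [sq_nonneg (uy x), sq_nonneg (duy x)]
  have hsupy : ∀ t ∈ Icc (-a) a, uy t ^ 2 ≤ c * I := by
    intro t ht
    refine (sup_sq a ha uy duy hdy hcduy t ht).trans ?_
    rw [← hc]
    apply mul_le_mul_of_nonneg_left _ hc0.le
    rw [hIeq]
    apply integral_mono_on hle (intg _ ((hcuy.pow 2).add (hcduy.pow 2))) (intg _ hcfull)
    intro x _
    simp only [Pi.add_apply, Pi.pow_apply]
    linarith [sq_nonneg (ux x), sq_nonneg (dux x)]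
  have hsqrtmul : Real.sqrt (c * I) = Real.sqrt c * Real.sqrt I := Real.sqrt_mul hc0.le _
  have habsx : ∀ t ∈ Icc (-a) a, |ux t| ≤ Real.sqrt (c * I) := by
    intro t ht
    rw [← Real.sqrt_sq_eq_abs]
    exact Real.sqrt_le_sqrt (hsupx t ht)
  have habsy : ∀ t ∈ Icc (-a) a, |uy t| ≤ Real.sqrt (c * I) := by
    intro t ht
    rw [← Real.sqrt_sq_eq_abs]
    exact Real.sqrt_le_sqrt (hsupy t ht)
  have hma : -a ∈ Icc (-a) a := ⟨le_rfl, hle⟩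
  have hpa : a ∈ Icc (-a) a := ⟨hle, le_rfl⟩
  -- FTC identities
  have h1 : (∫ x in (-a)..a, duy x) = uy a - uy (-a) := my_ftc hle uy duy hdy hcduy
  have hder2 : ∀ x ∈ Icc (-a) a, HasDerivWithinAt (fun x => x * duy x)
      (duy x + x * dduy x) (Icc (-a) a) x := by
    intro x hx
    have h : HasDerivWithinAt (fun y => y * duy y) (1 * duy x + id x * dduy x) (Icc (-a) a) x :=
      (hasDerivWithinAt_id x (Icc (-a) a)).fun_mul (hddy x hx)
    convert h using 1
    simp only [id_eq]
    ring
  have h2 : (∫ x in (-a)..a, (duy x + x * dduy x)) = a * duy a - (-a) * duy (-a) :=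
    my_ftc hle (fun x => x * duy x) (fun x => duy x + x * dduy x) hder2
      (hcduy.add (continuousOn_id.mul hcdduy))
  have h3 : (∫ x in (-a)..a, (duy x * dux x + uy x * ddux x)) =
      uy a * dux a - uy (-a) * dux (-a) :=
    my_ftc hle (fun x => uy x * dux x) (fun x => duy x * dux x + uy x * ddux x)
      (fun x hx => (hdy x hx).mul (hddx x hx))
      ((hcduy.mul hcdux).add (hcuy.mul hcddux))
  have hsplit2 : (∫ x in (-a)..a, (duy x + x * dduy x)) =
      (∫ x in (-a)..a, duy x) + ∫ x in (-a)..a, x * dduy x :=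
    integral_add (intg _ hcduy) (intg _ (continuousOn_id.mul hcdduy))
  have hsplit3 : (∫ x in (-a)..a, (duy x * dux x + uy x * ddux x)) =
      (∫ x in (-a)..a, duy x * dux x) + ∫ x in (-a)..a, uy x * ddux x :=
    integral_add (intg _ (hcduy.mul hcdux)) (intg _ (hcuy.mul hcddux))
  -- Robin conditions rewritten
  have hduya : duy a = -(uy a) / lamy := by
    have h : lamy * duy a + uy a = 0 := hR2
    field_simp
    linarith
  have hduyma : duy (-a) = uy (-a) / lamy := by
    have h : lamy * duy (-a) - uy (-a) = 0 := hL2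
    field_simp
    linarith
  have hduxa : dux a = -(ux a) / lamx := by
    have h : lamx * dux a + ux a = 0 := hR1
    field_simp
    linarith
  have hduxma : dux (-a) = ux (-a) / lamx := by
    have h : lamx * dux (-a) - ux (-a) = 0 := hL1
    field_simp
    linarith
  -- expressions for second-derivative integrals
  have e2 : (∫ x in (-a)..a, x * dduy x) = (a/lamy + 1) * (uy (-a) - uy a) := by
    have h4 : (∫ x in (-a)..a, x * dduy x) =
        a * duy a - (-a) * duy (-a) - (uy a - uy (-a)) := by
      rw [← h1]; linarith [h2, hsplit2]
    rw [h4, hduya, hduyma]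
    field_simp
    ring
  have e4 : (∫ x in (-a)..a, uy x * ddux x) =
      -((uy a * ux a) / lamx) - (uy (-a) * ux (-a)) / lamx -
        ∫ x in (-a)..a, duy x * dux x := by
    have h4 : (∫ x in (-a)..a, uy x * ddux x) =
        uy a * dux a - uy (-a) * dux (-a) - ∫ x in (-a)..a, duy x * dux x := by
      linarith [h3, hsplit3]
    rw [h4, hduxa, hduxma]
    field_simp
  -- main splitting of M
  have hM : (∫ x in (-a)..a,
      (x * (ky * uy x - sy * dduy x) - uy x * (kx * ux x - sx * ddux x))) =
      ky * (∫ x in (-a)..a, x * uy x) - sy * (∫ x in (-a)..a, x * dduy x) -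
        (kx * (∫ x in (-a)..a, uy x * ux x) - sx * ∫ x in (-a)..a, uy x * ddux x) := by
    have step1 : (∫ x in (-a)..a,
        (x * (ky * uy x - sy * dduy x) - uy x * (kx * ux x - sx * ddux x))) =
        ∫ x in (-a)..a,
          ((ky * (x * uy x) - sy * (x * dduy x)) -
            (kx * (uy x * ux x) - sx * (uy x * ddux x))) :=
      integral_congr fun x _ => by ring
    have i1 : IntervalIntegrable (fun x => ky * (x * uy x)) volume (-a) a :=
      intg _ (continuousOn_const.mul (continuousOn_id.mul hcuy))
    have i2 : IntervalIntegrable (fun x => sy * (x * dduy x)) volume (-a) a :=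
      intg _ (continuousOn_const.mul (continuousOn_id.mul hcdduy))
    have i3 : IntervalIntegrable (fun x => kx * (uy x * ux x)) volume (-a) a :=
      intg _ (continuousOn_const.mul (hcuy.mul hcux))
    have i4 : IntervalIntegrable (fun x => sx * (uy x * ddux x)) volume (-a) a :=
      intg _ (continuousOn_const.mul (hcuy.mul hcddux))
    rw [step1, intervalIntegral.integral_sub (i1.sub i2) (i3.sub i4),
      intervalIntegral.integral_sub i1 i2, intervalIntegral.integral_sub i3 i4,
      intervalIntegral.integral_const_mul, intervalIntegral.integral_const_mul, intervalIntegral.integral_const_mul, intervalIntegral.integral_const_mul]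
  set A1 : ℝ := ∫ x in (-a)..a, x * uy x with hA1_def
  set A2 : ℝ := ∫ x in (-a)..a, uy x * ux x with hA2_def
  set A3 : ℝ := ∫ x in (-a)..a, duy x * dux x with hA3_def
  have hfinal : (∫ x in (-a)..a,
      (x * (ky * uy x - sy * dduy x) - uy x * (kx * ux x - sx * ddux x))) =
      ky * A1 + sy * ((a/lamy + 1) * (uy a - uy (-a))) + (-kx) * A2 +
        (-(sx/lamx)) * (uy a * ux a + uy (-a) * ux (-a)) + (-sx) * A3 := by
    rw [hM, e2, e4]
    ring
  -- bounds on the pieces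
  have hA1bnd : |A1| ≤ a * Real.sqrt (c * I) * (2 * a) := by
    have := norm_integral_le_of_norm_le_const (C := a * Real.sqrt (c * I))
      (f := fun x => x * uy x) (a := -a) (b := a) ?_
    · rw [Real.norm_eq_abs] at this
      calc |A1| ≤ a * Real.sqrt (c * I) * |a - (-a)| := this
        _ = a * Real.sqrt (c * I) * (2 * a) := by
            rw [show a - (-a) = 2*a by ring, abs_of_nonneg (by linarith)]
    · intro x hx
      rw [uIoc_of_le hle] at hx
      have hx' : x ∈ Icc (-a) a := ⟨hx.1.le, hx.2⟩
      rw [Real.norm_eq_abs, abs_mul]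
      apply mul_le_mul _ (habsy x hx') (abs_nonneg _) (by linarith)
      rw [abs_le]
      exact ⟨hx'.1, hx'.2⟩
  have hA2bnd : |A2| ≤ I := by
    calc |A2| ≤ ∫ x in (-a)..a, |uy x * ux x| := abs_integral_le_integral_abs hle
      _ ≤ ∫ x in (-a)..a, (ux x ^ 2 + uy x ^ 2 + dux x ^ 2 + duy x ^ 2) := by
          apply integral_mono_on hle (intg _ (hcuy.mul hcux).abs) (intg _ hcfull)
          intro x _
          simp only [Pi.mul_apply]
          linarith [abs_mul_le_half (uy x) (ux x), sq_nonneg (dux x), sq_nonneg (duy x), sq_nonneg (ux x), sq_nonneg (uy x)]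
      _ = I := hIeq.symm
  have hA3bnd : |A3| ≤ I := by
    calc |A3| ≤ ∫ x in (-a)..a, |duy x * dux x| := abs_integral_le_integral_abs hle
      _ ≤ ∫ x in (-a)..a, (ux x ^ 2 + uy x ^ 2 + dux x ^ 2 + duy x ^ 2) := by
          apply integral_mono_on hle (intg _ (hcduy.mul hcdux).abs) (intg _ hcfull)
          intro x _
          simp only [Pi.mul_apply]
          linarith [abs_mul_le_half (duy x) (dux x), sq_nonneg (ux x), sq_nonneg (uy x), sq_nonneg (dux x), sq_nonneg (duy x)]
      _ = I := hIeq.symm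
  have hcI0 : 0 ≤ c * I := by positivity
  have hprod : ∀ p q : ℝ, |p| ≤ Real.sqrt (c * I) → |q| ≤ Real.sqrt (c * I) →
      |p * q| ≤ c * I := by
    intro p q hp hq
    rw [abs_mul]
    calc |p| * |q| ≤ Real.sqrt (c * I) * Real.sqrt (c * I) :=
        mul_le_mul hp hq (abs_nonneg _) (Real.sqrt_nonneg _)
      _ = c * I := Real.mul_self_sqrt hcI0
  -- final estimate
  rw [hfinal]
  have tri : ∀ x1 x2 x3 x4 x5 : ℝ,
      |x1 + x2 + x3 + x4 + x5| ≤ |x1| + |x2| + |x3| + |x4| + |x5| := by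
    intro x1 x2 x3 x4 x5
    have t1 := abs_add_le (x1 + x2 + x3 + x4) x5
    have t2 := abs_add_le (x1 + x2 + x3) x4
    have t3 := abs_add_le (x1 + x2) x3
    have t4 := abs_add_le x1 x2
    linarith
  have b1 : |ky * A1| ≤ ky * (a * Real.sqrt (c * I) * (2 * a)) := by
    rw [abs_mul, abs_of_pos hky]
    exact mul_le_mul_of_nonneg_left hA1bnd hky.le
  have b2 : |sy * ((a/lamy + 1) * (uy a - uy (-a)))| ≤
      sy * ((a/lamy + 1) * (2 * Real.sqrt (c * I))) := by
    rw [abs_mul, abs_of_pos hsy, abs_mul, abs_of_pos (by positivity : (0:ℝ) < a/lamy + 1)]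
    apply mul_le_mul_of_nonneg_left _ hsy.le
    apply mul_le_mul_of_nonneg_left _ (by positivity : (0:ℝ) ≤ a/lamy + 1)
    calc |uy a - uy (-a)| ≤ |uy a| + |uy (-a)| := abs_sub _ _
      _ ≤ 2 * Real.sqrt (c * I) := by linarith [habsy a hpa, habsy (-a) hma]
  have b3 : |(-kx) * A2| ≤ kx * I := by
    rw [abs_mul, abs_neg, abs_of_pos hkx]
    exact mul_le_mul_of_nonneg_left hA2bnd hkx.le
  have b4 : |(-(sx/lamx)) * (uy a * ux a + uy (-a) * ux (-a))| ≤ (sx/lamx) * (2 * (c * I)) := by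
    rw [abs_mul, abs_neg, abs_of_pos (by positivity : (0:ℝ) < sx/lamx)]
    apply mul_le_mul_of_nonneg_left _ (by positivity : (0:ℝ) ≤ sx/lamx)
    calc |uy a * ux a + uy (-a) * ux (-a)| ≤ |uy a * ux a| + |uy (-a) * ux (-a)| := abs_add_le _ _
      _ ≤ 2 * (c * I) := by
          linarith [hprod _ _ (habsy a hpa) (habsx a hpa),
            hprod _ _ (habsy (-a) hma) (habsx (-a) hma)]
  have b5 : |(-sx) * A3| ≤ sx * I := by
    rw [abs_mul, abs_neg, abs_of_pos hsx]
    exact mul_le_mul_of_nonneg_left hA3bnd hsx.le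
  calc |ky * A1 + sy * ((a/lamy + 1) * (uy a - uy (-a))) + (-kx) * A2 +
      (-(sx/lamx)) * (uy a * ux a + uy (-a) * ux (-a)) + (-sx) * A3|
      ≤ |ky * A1| + |sy * ((a/lamy + 1) * (uy a - uy (-a)))| + |(-kx) * A2| +
        |(-(sx/lamx)) * (uy a * ux a + uy (-a) * ux (-a))| + |(-sx) * A3| := tri _ _ _ _ _
    _ ≤ ky * (a * Real.sqrt (c * I) * (2 * a)) +
        sy * ((a/lamy + 1) * (2 * Real.sqrt (c * I))) + kx * I +
        (sx/lamx) * (2 * (c * I)) + sx * I := by linarith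
    _ = (ky * (2*a^2) + 2*sy*(a/lamy + 1)) * Real.sqrt c * Real.sqrt I +
        (kx + sx + 2*sx*c/lamx) * I := by rw [hsqrtmul]; ring
end

section
/- Fix ε > 0, a rolling speed V_r > 0, and p(x) > 0. Then for every v̄ ∈ ℝ² and every x ∈ [−a,a], the diffusion matrix Γ(v̄, x) := −Ψ(v̄) Σ₁(x) of the FrSD PDE is symmetric positive definite: explicitly, Γ(v̄, x) = (‖M(V_r v̄) V_r v̄‖_{2,ε} / (V_r p(x))) M(V_r v̄)⁻² S, and yᵀ Γ(v̄, x) y ≥ ( √ε · min(s_x, s_y) / ( V_r p(x) max(μ_x(V_r v̄), μ_y(V_r v̄))² ) ) ‖y‖₂² for all y ∈ ℝ². Hence the FrSD governing equations are (uniformly) parabolic for every slip input whenever ε > 0. -/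
open Set

/-- Diagonal entries of the diffusion matrix `Γ(v̄,x) = −Ψ(v̄) Σ₁(x)`,
with `Σ₁(x) = S/p(x)`. -/
noncomputable def Gamma1 (μ1 μ2 : ℝ × ℝ → ℝ) (ε Vr sx : ℝ) (p : ℝ → ℝ)
    (vb : ℝ × ℝ) (x : ℝ) : ℝ :=
  -(Psi1 μ1 μ2 ε Vr vb) * (sx / p x)

noncomputable def Gamma2 (μ1 μ2 : ℝ × ℝ → ℝ) (ε Vr sy : ℝ) (p : ℝ → ℝ)
    (vb : ℝ × ℝ) (x : ℝ) : ℝ :=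
  -(Psi2 μ1 μ2 ε Vr vb) * (sy / p x)

/-- The diffusion matrix of the FrSD PDE is symmetric positive
definite: explicitly `Γ(v̄,x) = (‖M(V_r v̄)V_r v̄‖_{2,ε}/(V_r p(x))) M(V_r v̄)⁻² S`
and `yᵀΓ(v̄,x)y ≥ (√ε · min(s_x,s_y)/(V_r p(x) max(μ_x, μ_y)²)) ‖y‖₂²`;
hence the FrSD equations are uniformly parabolic for every slip input. -/
theorem statement_17 (a ε Vr sx sy : ℝ) (μ1 μ2 : ℝ × ℝ → ℝ) (p : ℝ → ℝ)
    (ha : 0 < a) (hε : 0 < ε) (hVr : 0 < Vr)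
    (hsx : 0 < sx) (hsy : 0 < sy)
    (hμ1c : Continuous μ1) (hμ2c : Continuous μ2)
    (hμpos : ∀ v : ℝ × ℝ, 0 < μ1 v ∧ 0 < μ2 v)
    (hppos : ∀ x ∈ Icc (-a) a, 0 < p x) :
    ∀ vb : ℝ × ℝ, ∀ x ∈ Icc (-a) a,
      -- explicit formula
      (Gamma1 μ1 μ2 ε Vr sx p vb x =
          nreg ε (Mvec μ1 μ2 (Vr • vb)) / (Vr * p x) * (sx / (μ1 (Vr • vb)) ^ 2) ∧
        Gamma2 μ1 μ2 ε Vr sy p vb x =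
          nreg ε (Mvec μ1 μ2 (Vr • vb)) / (Vr * p x) * (sy / (μ2 (Vr • vb)) ^ 2)) ∧
      -- positive definiteness
      0 < Gamma1 μ1 μ2 ε Vr sx p vb x ∧ 0 < Gamma2 μ1 μ2 ε Vr sy p vb x ∧
      -- uniform ellipticity bound
      (∀ y : ℝ × ℝ,
        Real.sqrt ε * min sx sy /
            (Vr * p x * (max (μ1 (Vr • vb)) (μ2 (Vr • vb))) ^ 2) *
            (y.1 ^ 2 + y.2 ^ 2) ≤
          Gamma1 μ1 μ2 ε Vr sx p vb x * y.1 ^ 2 +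
            Gamma2 μ1 μ2 ε Vr sy p vb x * y.2 ^ 2) := by
  intro vb x hx
  obtain ⟨hμ1, hμ2⟩ := hμpos (Vr • vb)
  have hp := hppos x hx
  have hNge : Real.sqrt ε ≤ nreg ε (Mvec μ1 μ2 (Vr • vb)) := by
    apply Real.sqrt_le_sqrt
    nlinarith [sq_nonneg (Mvec μ1 μ2 (Vr • vb)).1, sq_nonneg (Mvec μ1 μ2 (Vr • vb)).2]
  have hsε : 0 < Real.sqrt ε := Real.sqrt_pos.2 hε
  have hNpos : 0 < nreg ε (Mvec μ1 μ2 (Vr • vb)) := lt_of_lt_of_le hsε hNge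
  have h1 : Gamma1 μ1 μ2 ε Vr sx p vb x =
      nreg ε (Mvec μ1 μ2 (Vr • vb)) / (Vr * p x) * (sx / (μ1 (Vr • vb)) ^ 2) := by
    simp only [Gamma1, Psi1]
    field_simp
  have h2 : Gamma2 μ1 μ2 ε Vr sy p vb x =
      nreg ε (Mvec μ1 μ2 (Vr • vb)) / (Vr * p x) * (sy / (μ2 (Vr • vb)) ^ 2) := by
    simp only [Gamma2, Psi2]
    field_simp
  have hG1 : 0 < Gamma1 μ1 μ2 ε Vr sx p vb x := by rw [h1]; positivity
  have hG2 : 0 < Gamma2 μ1 μ2 ε Vr sy p vb x := by rw [h2]; positivity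
  refine ⟨⟨h1, h2⟩, hG1, hG2, ?_⟩
  intro y
  have hmax1 : μ1 (Vr • vb) ≤ max (μ1 (Vr • vb)) (μ2 (Vr • vb)) := le_max_left _ _
  have hmax2 : μ2 (Vr • vb) ≤ max (μ1 (Vr • vb)) (μ2 (Vr • vb)) := le_max_right _ _
  have hL1 : Real.sqrt ε * min sx sy /
      (Vr * p x * (max (μ1 (Vr • vb)) (μ2 (Vr • vb))) ^ 2) ≤
      Gamma1 μ1 μ2 ε Vr sx p vb x := by
    rw [h1, div_mul_div_comm]
    apply div_le_div₀ (by positivity)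
      (mul_le_mul hNge (min_le_left _ _) (le_min hsx.le hsy.le) hNpos.le)
      (by positivity)
    have : (μ1 (Vr • vb)) ^ 2 ≤ (max (μ1 (Vr • vb)) (μ2 (Vr • vb))) ^ 2 := by
      nlinarith
    exact mul_le_mul_of_nonneg_left this (mul_pos hVr hp).le
  have hL2 : Real.sqrt ε * min sx sy /
      (Vr * p x * (max (μ1 (Vr • vb)) (μ2 (Vr • vb))) ^ 2) ≤
      Gamma2 μ1 μ2 ε Vr sy p vb x := by
    rw [h2, div_mul_div_comm]
    apply div_le_div₀ (by positivity)
      (mul_le_mul hNge (min_le_right _ _) (le_min hsx.le hsy.le) hNpos.le)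
      (by positivity)
    have : (μ2 (Vr • vb)) ^ 2 ≤ (max (μ1 (Vr • vb)) (μ2 (Vr • vb))) ^ 2 := by
      nlinarith
    exact mul_le_mul_of_nonneg_left this (mul_pos hVr hp).le
  nlinarith [mul_le_mul_of_nonneg_right hL1 (sq_nonneg y.1),
    mul_le_mul_of_nonneg_right hL2 (sq_nonneg y.2)]
end

section
/- Fix ε > 0, a rolling speed V_r > 0, and a continuous p : [−a,a] → ℝ_{>0}. Let q, v̄ : [−a,a] → ℝ² be continuous, and define the sliding velocity predicted by the FrSD model by v_s(x) := V_r Ψ(v̄(x)) q(x) / p(x). Then q(x)ᵀ v_s(x) ≤ 0 for every x ∈ [−a,a], and consequently ∫_{−a}^{a} q(x)ᵀ v_s(x) dx ≤ 0; that is, the dissipation rate −∫_{−a}^{a} q(x)ᵀ v_s(x) dx = ∫_{−a}^{a} (V_r / p(x)) · (‖M(V_r v̄(x)) V_r v̄(x)‖_{2,ε} / V_r) · ‖M(V_r v̄(x))⁻¹ q(x)‖₂² dx is nonnegative, so the FrSD model dissipates energy in the contact patch. -/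
open Set MeasureTheory intervalIntegral

/-- Sliding velocity predicted by the FrSD model:
`v_s(x) = V_r Ψ(v̄(x)) q(x) / p(x)`, componentwise. -/
noncomputable def vSlide (μ1 μ2 : ℝ × ℝ → ℝ) (ε Vr : ℝ) (p : ℝ → ℝ)
    (vb q : ℝ → ℝ × ℝ) (x : ℝ) : ℝ × ℝ :=
  (Vr * Psi1 μ1 μ2 ε Vr (vb x) * (q x).1 / p x,
   Vr * Psi2 μ1 μ2 ε Vr (vb x) * (q x).2 / p x)

/-- Local energy dissipation of the FrSD model:
`q(x)ᵀ v_s(x) ≤ 0` pointwise, hence `∫ qᵀ v_s dx ≤ 0`, and the dissipation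
rate equals
`∫ (V_r/p)(‖M V_r v̄‖_{2,ε}/V_r)‖M⁻¹ q‖₂² dx ≥ 0`. -/
theorem statement_19 (a ε Vr : ℝ) (μ1 μ2 : ℝ × ℝ → ℝ) (p : ℝ → ℝ)
    (q vb : ℝ → ℝ × ℝ)
    (ha : 0 < a) (hε : 0 < ε) (hVr : 0 < Vr)
    (hμ1c : Continuous μ1) (hμ2c : Continuous μ2)
    (hμpos : ∀ v : ℝ × ℝ, 0 < μ1 v ∧ 0 < μ2 v)
    (hpc : ContinuousOn p (Icc (-a) a)) (hppos : ∀ x ∈ Icc (-a) a, 0 < p x)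
    (hqc : ContinuousOn q (Icc (-a) a)) (hvbc : ContinuousOn vb (Icc (-a) a)) :
    (∀ x ∈ Icc (-a) a,
      (q x).1 * (vSlide μ1 μ2 ε Vr p vb q x).1 +
        (q x).2 * (vSlide μ1 μ2 ε Vr p vb q x).2 ≤ 0) ∧
    (∫ x in (-a)..a,
        ((q x).1 * (vSlide μ1 μ2 ε Vr p vb q x).1 +
          (q x).2 * (vSlide μ1 μ2 ε Vr p vb q x).2)) ≤ 0 ∧
    -(∫ x in (-a)..a,
        ((q x).1 * (vSlide μ1 μ2 ε Vr p vb q x).1 +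
          (q x).2 * (vSlide μ1 μ2 ε Vr p vb q x).2)) =
      ∫ x in (-a)..a,
        (Vr / p x) * (nreg ε (Mvec μ1 μ2 (Vr • vb x)) / Vr) *
          (((q x).1 / μ1 (Vr • vb x)) ^ 2 + ((q x).2 / μ2 (Vr • vb x)) ^ 2) := by
  
  have hVr' : Vr ≠ 0 := hVr.ne'
  have hab : (-a) ≤ a := by linarith
  set g : ℝ → ℝ := fun x => (Vr / p x) * (nreg ε (Mvec μ1 μ2 (Vr • vb x)) / Vr) *
      (((q x).1 / μ1 (Vr • vb x)) ^ 2 + ((q x).2 / μ2 (Vr • vb x)) ^ 2) with hg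
  have key : ∀ x ∈ Icc (-a) a, (q x).1 * (vSlide μ1 μ2 ε Vr p vb q x).1 +
      (q x).2 * (vSlide μ1 μ2 ε Vr p vb q x).2 = -g x := by
    intro x hx
    have h1 := (hμpos (Vr • vb x)).1.ne'
    have h2 := (hμpos (Vr • vb x)).2.ne'
    have hp := (hppos x hx).ne'
    simp only [hg, vSlide, Psi1, Psi2]
    field_simp
    ring
  have hgnn : ∀ x ∈ Icc (-a) a, 0 ≤ g x := by
    intro x hx
    have hp := hppos x hx
    have hn : 0 ≤ nreg ε (Mvec μ1 μ2 (Vr • vb x)) := Real.sqrt_nonneg _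
    simp only [hg]
    positivity
  have hint : (∫ x in (-a)..a,
      ((q x).1 * (vSlide μ1 μ2 ε Vr p vb q x).1 +
        (q x).2 * (vSlide μ1 μ2 ε Vr p vb q x).2)) = -∫ x in (-a)..a, g x := by
    rw [← intervalIntegral.integral_neg]
    refine intervalIntegral.integral_congr fun x hx => ?_
    rw [uIcc_of_le hab] at hx
    simpa using key x hx
  refine ⟨fun x hx => by rw [key x hx]; exact neg_nonpos.2 (hgnn x hx), ?_, ?_⟩
  · rw [hint]
    exact neg_nonpos.2 (intervalIntegral.integral_nonneg hab hgnn)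
  · rw [hint, neg_neg]
end
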